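/- arXiv:2309.11292 — 8 statements merged into one kernel-verified Lean document; each statement's English description precedes it below -/
import Mathlib

section
/- For every n ≥ 1 and every σ ∈ S_n, the map h_σ : S_n → S_n defined by h_σ(π) = f_{σ,π} ∘ π ∘ f_{σ,π}^{−1} belongs to H_n, and its inverse is h_{σ^{−1}}; moreover π and h_σ(π) induce the same orbit equivalence relation on [n] for every π. -/
open Finset
open scoped Classical

/-- `B_n`: the set of bijections of `S_n` preserving conjugacy classes (cycle types). -/
def Bset (n : ℕ) : Set (Equiv.Perm (Equiv.Perm (Fin n))) :=
  {h | ∀ π, IsConj π (h π)}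

/-- `H_n`: the set of cycle-type-preserving bijections `h` of `S_n` such that
`i ~_π j` implies `i ~_{h(π)} j` for all `i, j` and `π`. -/
def Hset (n : ℕ) : Set (Equiv.Perm (Equiv.Perm (Fin n))) :=
  {h | (∀ π, IsConj π (h π)) ∧
    ∀ (π : Equiv.Perm (Fin n)) (i j : Fin n), π.SameCycle i j → (h π).SameCycle i j}

/-- `p_{σ,π}(i) = min {p ≥ 1 : σ^p(i) ~_π i}` (it exists: `p = orderOf σ` works). -/
noncomputable def pmin {n : ℕ} (σ π : Equiv.Perm (Fin n)) (i : Fin n) : ℕ :=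
  Nat.find (p := fun p => 0 < p ∧ π.SameCycle ((σ ^ p) i) i)
    ⟨orderOf σ, orderOf_pos σ, by rw [pow_orderOf_eq_one]; exact Equiv.Perm.SameCycle.refl _ _⟩

/-- `f_{σ,π}(i) = σ^{p_{σ,π}(i)}(i)`. -/
noncomputable def fmap {n : ℕ} (σ π : Equiv.Perm (Fin n)) : Fin n → Fin n :=
  fun i => (σ ^ pmin σ π i) i

namespace HmapAux

variable {n : ℕ}

lemma pmin_pos (σ π : Equiv.Perm (Fin n)) (i : Fin n) : 0 < pmin σ π i :=
  (Nat.find_spec (p := fun p => 0 < p ∧ π.SameCycle ((σ ^ p) i) i) _).1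

lemma pmin_sameCycle (σ π : Equiv.Perm (Fin n)) (i : Fin n) :
    π.SameCycle ((σ ^ pmin σ π i) i) i :=
  (Nat.find_spec (p := fun p => 0 < p ∧ π.SameCycle ((σ ^ p) i) i) _).2

lemma pmin_le (σ π : Equiv.Perm (Fin n)) (i : Fin n) {q : ℕ} (h1 : 0 < q)
    (h2 : π.SameCycle ((σ ^ q) i) i) : pmin σ π i ≤ q :=
  Nat.find_le ⟨h1, h2⟩

lemma pmin_min (σ π : Equiv.Perm (Fin n)) (i : Fin n) {q : ℕ} (hq : q < pmin σ π i)
    (h1 : 0 < q) : ¬ π.SameCycle ((σ ^ q) i) i := fun h2 =>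
  absurd (pmin_le σ π i h1 h2) (not_le.2 hq)

lemma pmin_eq (σ π : Equiv.Perm (Fin n)) (i : Fin n) {p : ℕ} (hp : 0 < p)
    (hc : π.SameCycle ((σ ^ p) i) i)
    (hmin : ∀ q, 0 < q → π.SameCycle ((σ ^ q) i) i → p ≤ q) : pmin σ π i = p :=
  le_antisymm (pmin_le σ π i hp hc)
    (hmin _ (pmin_pos σ π i) (pmin_sameCycle σ π i))

lemma pmin_congr (τ : Equiv.Perm (Fin n)) {π π' : Equiv.Perm (Fin n)}
    (h : ∀ a b, π.SameCycle a b ↔ π'.SameCycle a b) (i : Fin n) :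
    pmin τ π i = pmin τ π' i :=
  le_antisymm (pmin_le τ π i (pmin_pos τ π' i) ((h _ _).2 (pmin_sameCycle τ π' i)))
    (pmin_le τ π' i (pmin_pos τ π i) ((h _ _).1 (pmin_sameCycle τ π i)))

lemma fmap_sameCycle (σ π : Equiv.Perm (Fin n)) (i : Fin n) :
    π.SameCycle (fmap σ π i) i := pmin_sameCycle σ π i

lemma fmap_inv_fmap (σ π : Equiv.Perm (Fin n)) (i : Fin n) :
    fmap σ⁻¹ π (fmap σ π i) = i := by
  set p := pmin σ π i with hp
  set j := (σ ^ p) i with hjdef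
  have hj : (σ⁻¹ ^ p) j = i := by
    rw [hjdef, inv_pow]
    exact Equiv.symm_apply_apply _ _
  have hpm : pmin σ⁻¹ π j = p := by
    refine pmin_eq σ⁻¹ π j (pmin_pos σ π i) (by rw [hj]; exact (pmin_sameCycle σ π i).symm) ?_
    intro q hq hc
    by_contra hlt
    push_neg at hlt
    have hσq : (σ⁻¹ ^ q) j = (σ ^ (p - q)) i := by
      have hsplit : σ ^ p = σ ^ q * σ ^ (p - q) := by
        rw [← pow_add]; congr 1; omega
      rw [hjdef, inv_pow, hsplit]
      simp [Equiv.Perm.mul_apply]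
    rw [hσq] at hc
    have hji : π.SameCycle j i := pmin_sameCycle σ π i
    have : π.SameCycle ((σ ^ (p - q)) i) i := hc.trans hji
    exact pmin_min σ π i (by omega) (by omega) this
  show (σ⁻¹ ^ pmin σ⁻¹ π j) j = i
  rw [hpm, hj]

/-- `f_{σ,π}` as a permutation. -/
noncomputable def F (σ π : Equiv.Perm (Fin n)) : Equiv.Perm (Fin n) :=
  ⟨fmap σ π, fmap σ⁻¹ π, fun i => fmap_inv_fmap σ π i,
    fun i => by simpa using fmap_inv_fmap σ⁻¹ π i⟩

@[simp] lemma F_apply (σ π : Equiv.Perm (Fin n)) (i : Fin n) : F σ π i = fmap σ π i := rfl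

@[simp] lemma F_inv_apply (σ π : Equiv.Perm (Fin n)) (i : Fin n) :
    (F σ π)⁻¹ i = fmap σ⁻¹ π i := rfl

lemma sameCycle_conjF (σ π : Equiv.Perm (Fin n)) (i j : Fin n) :
    π.SameCycle i j ↔ (F σ π * π * (F σ π)⁻¹).SameCycle i j := by
  rw [Equiv.Perm.sameCycle_conj]
  have hi : π.SameCycle ((F σ π)⁻¹ i) i := fmap_sameCycle σ⁻¹ π i
  have hj : π.SameCycle ((F σ π)⁻¹ j) j := fmap_sameCycle σ⁻¹ π j
  constructor
  · intro h; exact (hi.trans h).trans hj.symm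
  · intro h; exact (hi.symm.trans h).trans hj

lemma F_conj (σ π : Equiv.Perm (Fin n)) :
    F σ⁻¹ (F σ π * π * (F σ π)⁻¹) = (F σ π)⁻¹ := by
  refine Equiv.Perm.ext fun i => ?_
  show fmap σ⁻¹ (F σ π * π * (F σ π)⁻¹) i = fmap σ⁻¹ π i
  unfold fmap
  rw [pmin_congr σ⁻¹ (fun a b => (sameCycle_conjF σ π a b).symm) i]

lemma hfun_inv (σ π : Equiv.Perm (Fin n)) :
    F σ⁻¹ (F σ π * π * (F σ π)⁻¹) * (F σ π * π * (F σ π)⁻¹) *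
      (F σ⁻¹ (F σ π * π * (F σ π)⁻¹))⁻¹ = π := by
  rw [F_conj]; group

/-- `h_σ` as a permutation of `S_n`. -/
noncomputable def H (σ : Equiv.Perm (Fin n)) : Equiv.Perm (Equiv.Perm (Fin n)) :=
  ⟨fun π => F σ π * π * (F σ π)⁻¹, fun π => F σ⁻¹ π * π * (F σ⁻¹ π)⁻¹,
    fun π => hfun_inv σ π, fun π => by simpa using hfun_inv σ⁻¹ π⟩

end HmapAux

/-- **The maps `h_σ : π ↦ f_{σ,π} ∘ π ∘ f_{σ,π}⁻¹` belong to `H_n`.**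
For every `σ ∈ S_n` there is a bijection `h_σ` of `S_n` such that, for every `π`,
`h_σ(π) = f π f⁻¹` where `f ∈ S_n` is the bijection `f_{σ,π}`; `h_σ` lies in `H_n`,
its inverse is `h_{σ⁻¹}`, and `π` and `h_σ(π)` induce the same orbit equivalence
relation on `[n]` for every `π`. -/
theorem hmap_mem_Hset (n : ℕ) (hn : 1 ≤ n) (σ : Equiv.Perm (Fin n)) :
    ∃ hσ : Equiv.Perm (Equiv.Perm (Fin n)),
      (∀ π : Equiv.Perm (Fin n), ∃ f : Equiv.Perm (Fin n),
        (∀ i, f i = fmap σ π i) ∧ hσ π = f * π * f⁻¹) ∧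
      hσ ∈ Hset n ∧
      (∃ hσ' : Equiv.Perm (Equiv.Perm (Fin n)),
        (∀ π : Equiv.Perm (Fin n), ∃ f' : Equiv.Perm (Fin n),
          (∀ i, f' i = fmap σ⁻¹ π i) ∧ hσ' π = f' * π * f'⁻¹) ∧
        hσ⁻¹ = hσ') ∧
      (∀ (π : Equiv.Perm (Fin n)) (i j : Fin n),
        π.SameCycle i j ↔ (hσ π).SameCycle i j) := by
  refine ⟨HmapAux.H σ, fun π => ⟨HmapAux.F σ π, fun i => rfl, rfl⟩,
    ⟨fun π => isConj_iff.mpr ⟨HmapAux.F σ π, rfl⟩,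
      fun π i j h => (HmapAux.sameCycle_conjF σ π i j).1 h⟩,
    ⟨HmapAux.H σ⁻¹, fun π => ⟨HmapAux.F σ⁻¹ π, fun i => rfl, rfl⟩, Equiv.ext fun π => rfl⟩,
    fun π i j => HmapAux.sameCycle_conjF σ π i j⟩
end

section
/- For every n ≥ 2, every element h of H_n fixes every transposition of S_n, i.e. h((i j)) = (i j) for all distinct i,j ∈ [n]. -/
open Finset
open scoped Classical

lemma swap_zpow_apply {α : Type*} [DecidableEq α] (a b : α) (k : ℤ) (x : α) :
    (Equiv.swap a b ^ k) x = x ∨ (Equiv.swap a b ^ k) x = Equiv.swap a b x := by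
  have h2 : Equiv.swap a b ^ (2 : ℤ) = 1 := by
    rw [show (2:ℤ) = 1 + 1 by norm_num, zpow_add, zpow_one, Equiv.swap_mul_self]
  have hk : Equiv.swap a b ^ k = Equiv.swap a b ^ (k % 2) := by
    conv_lhs => rw [← Int.emod_add_mul_ediv k 2]
    rw [zpow_add, zpow_mul, h2, one_zpow, mul_one]
  rcases Int.emod_two_eq k with h | h <;> rw [hk, h]
  · left; simp
  · right; simp

/-- **Every element of `H_n` fixes every transposition.** For `n ≥ 2`, every `h ∈ H_n`
satisfies `h((i j)) = (i j)` for all distinct `i, j ∈ [n]`. -/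
theorem Hset_fixes_transpositions (n : ℕ) (hn : 2 ≤ n)
    (h : Equiv.Perm (Equiv.Perm (Fin n))) (hh : h ∈ Hset n)
    (i j : Fin n) (hij : i ≠ j) :
    h (Equiv.swap i j) = Equiv.swap i j := by
  obtain ⟨hc, hs⟩ := hh
  obtain ⟨σ, hσ⟩ := isConj_iff.mp (hc (Equiv.swap i j))
  have hconj : h (Equiv.swap i j) = Equiv.swap (σ i) (σ j) := by
    rw [Equiv.swap_apply_apply]; exact hσ.symm
  have hsc := hs (Equiv.swap i j) i j ⟨1, by simp⟩
  rw [hconj] at hsc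
  obtain ⟨k, hk⟩ := hsc
  rcases swap_zpow_apply (σ i) (σ j) k i with h1 | h1
  · exact absurd (h1.symm.trans hk) hij
  · have hswap : Equiv.swap (σ i) (σ j) i = j := h1.symm.trans hk
    rw [hconj]
    rcases eq_or_ne i (σ i) with e | e
    · have hj : σ j = j := by rw [← e] at hswap; rwa [Equiv.swap_apply_left] at hswap
      rw [← e, hj]
    · rcases eq_or_ne i (σ j) with e2 | e2
      · have : j = σ i := by
          rw [← hswap, e2, Equiv.swap_apply_right]
        rw [← e2, ← this, Equiv.swap_comm]
      · exfalso
        rw [Equiv.swap_apply_of_ne_of_ne (Ne.symm (e ∘ Eq.symm)) (Ne.symm (e2 ∘ Eq.symm))] at hswap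
        exact hij hswap
end

section
/- Let 𝐧 ∈ ℕ^q with an 𝐧-coloring c, and let G_𝐧 = H_{|𝐧|} ⋊_φ S_𝐧 be the semidirect product with multiplication (h₁,σ₁)⋆(h₂,σ₂) = (h₁ ∘ φ_{σ₁}(h₂), σ₁σ₂). Then the map ((h,σ), π) ↦ (h,σ).π := h(σπσ^{−1}) is a group action of G_𝐧 on S_{|𝐧|}, and this action is faithful whenever |𝐧| ≥ 3. -/
open Finset
open scoped Classical

/-- `τ_σ : S_n → S_n`, conjugation `π ↦ σπσ⁻¹`, as a bijection of `S_n`. -/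
def tauConj {n : ℕ} (σ : Equiv.Perm (Fin n)) : Equiv.Perm (Equiv.Perm (Fin n)) :=
  (MulAut.conj σ).toEquiv

/-- **The semidirect product `G_𝐧 = H_{|𝐧|} ⋊_φ S_𝐧` acts on `S_{|𝐧|}` by
`(h,σ).π = h(σπσ⁻¹)`, faithfully whenever `|𝐧| ≥ 3`.** Here `S_𝐧` is the subgroup of
permutations preserving the `𝐧`-coloring `c`, the product on `G_𝐧` is
`(h₁,σ₁)⋆(h₂,σ₂) = (h₁ ∘ φ_{σ₁}(h₂), σ₁σ₂)` with `φ_σ(h) = τ_σ ∘ h ∘ τ_σ⁻¹`.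
The identity acts trivially, the action is compatible with `⋆`, and if `|𝐧| ≥ 3` and
`(h,σ) ∈ G_𝐧` acts trivially then `h = 1` and `σ = 1`. -/
theorem semidirect_action (q : ℕ) (n : Fin q → ℕ) (c : Fin (∑ j, n j) → Fin q)
    (hc : ∀ j, (Finset.univ.filter fun i => c i = j).card = n j) :
    (∀ π : Equiv.Perm (Fin (∑ j, n j)),
      (1 : Equiv.Perm (Equiv.Perm (Fin (∑ j, n j))))
        ((1 : Equiv.Perm (Fin (∑ j, n j))) * π * (1 : Equiv.Perm (Fin (∑ j, n j)))⁻¹) = π) ∧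
    (∀ h₁ h₂ : Equiv.Perm (Equiv.Perm (Fin (∑ j, n j))),
      h₁ ∈ Hset (∑ j, n j) → h₂ ∈ Hset (∑ j, n j) →
      ∀ σ₁ σ₂ : Equiv.Perm (Fin (∑ j, n j)),
        (∀ i, c (σ₁ i) = c i) → (∀ i, c (σ₂ i) = c i) →
        ∀ π : Equiv.Perm (Fin (∑ j, n j)),
          (h₁ * (tauConj σ₁ * h₂ * (tauConj σ₁)⁻¹)) ((σ₁ * σ₂) * π * (σ₁ * σ₂)⁻¹) =
            h₁ (σ₁ * (h₂ (σ₂ * π * σ₂⁻¹)) * σ₁⁻¹)) ∧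
    (3 ≤ ∑ j, n j →
      ∀ h ∈ Hset (∑ j, n j), ∀ σ : Equiv.Perm (Fin (∑ j, n j)), (∀ i, c (σ i) = c i) →
        (∀ π : Equiv.Perm (Fin (∑ j, n j)), h (σ * π * σ⁻¹) = π) → h = 1 ∧ σ = 1) := by
  refine ⟨fun π => by simp, ?_, ?_⟩
  · intro h₁ h₂ _ _ σ₁ σ₂ _ _ π
    have hinv : ∀ x : Equiv.Perm (Fin (∑ j, n j)),
        ((tauConj σ₁)⁻¹ : Equiv.Perm (Equiv.Perm (Fin (∑ j, n j)))) x = σ₁⁻¹ * x * σ₁ := by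
      intro x; rfl
    have e1 : ((tauConj σ₁)⁻¹ : Equiv.Perm (Equiv.Perm (Fin (∑ j, n j))))
        ((σ₁ * σ₂) * π * (σ₁ * σ₂)⁻¹) = σ₂ * π * σ₂⁻¹ := by
      rw [hinv]; group
    simp only [Equiv.Perm.mul_apply, e1]
    rfl
  · intro h3 h hH σ _ hact
    have key : ∀ ρ : Equiv.Perm (Fin (∑ j, n j)), h ρ = σ⁻¹ * ρ * σ := by
      intro ρ
      have := hact (σ⁻¹ * ρ * σ)
      rw [show σ * (σ⁻¹ * ρ * σ) * σ⁻¹ = ρ by group] at this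
      rw [this]
    have step : ∀ i j : Fin (∑ j, n j), i ≠ j → σ i = i ∨ σ i = j := by
      intro i j hij
      have hsc : (Equiv.swap i j).SameCycle i j := ⟨1, by simp⟩
      have := hH.2 (Equiv.swap i j) i j hsc
      rw [key] at this
      obtain ⟨m, hm⟩ := this
      have hm' : ((Equiv.swap i j) ^ m) (σ i) = σ j := by
        have he : (σ⁻¹ * Equiv.swap i j * σ) ^ m = σ⁻¹ * (Equiv.swap i j) ^ m * σ := by
          have := map_zpow (MulAut.conj σ⁻¹) (Equiv.swap i j) m
          simpa [MulAut.conj_apply, mul_assoc] using this.symm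
        rw [he] at hm
        simp only [Equiv.Perm.mul_apply] at hm
        have := congrArg σ hm
        simpa using this
      have hsq : (Equiv.swap i j) ^ (2:ℤ) = 1 := by
        rw [show (2:ℤ) = ((2:ℕ):ℤ) by norm_num, zpow_natCast]
        simp [pow_succ, Equiv.swap_mul_self]
      have hpow : (Equiv.swap i j) ^ m = 1 ∨ (Equiv.swap i j) ^ m = Equiv.swap i j := by
        rcases Int.even_or_odd m with ⟨k, hk⟩ | ⟨k, hk⟩
        · left
          rw [hk, show k + k = 2 * k by ring, zpow_mul, hsq, one_zpow]
        · right
          rw [hk, zpow_add, zpow_mul, hsq, one_zpow, one_mul, zpow_one]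
      rcases hpow with hp | hp
      · rw [hp] at hm'
        simp only [Equiv.Perm.one_apply] at hm'
        exact absurd (σ.injective hm') hij
      · rw [hp] at hm'
        by_cases h1 : σ i = i
        · exact Or.inl h1
        by_cases h2 : σ i = j
        · exact Or.inr h2
        · rw [Equiv.swap_apply_of_ne_of_ne h1 h2] at hm'
          exact absurd (σ.injective hm') hij
    have hσ : σ = 1 := by
      refine Equiv.ext fun i => ?_
      simp only [Equiv.Perm.coe_one, id_eq]
      have hcard : 3 ≤ Fintype.card (Fin (∑ j, n j)) := by simpa using h3
      obtain ⟨j, hj⟩ := Fintype.exists_ne_of_one_lt_card (by omega) i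
      obtain ⟨k, hk⟩ : ∃ k : Fin (∑ j, n j), k ≠ i ∧ k ≠ j := by
        by_contra hcon
        push_neg at hcon
        have hsub : (Finset.univ : Finset (Fin (∑ j, n j))) ⊆ {i, j} := by
          intro k _
          rcases eq_or_ne k i with rfl | hki
          · simp
          · simp [hcon k hki]
        have hle := Finset.card_le_card hsub
        simp only [Finset.card_univ] at hle
        have h2 : ({i, j} : Finset (Fin (∑ j, n j))).card ≤ 2 :=
          (Finset.card_insert_le _ _).trans (by simp)
        omega
      rcases step i j (Ne.symm hj) with h1 | h1
      · exact h1
      rcases step i k (fun e => hk.1 e.symm) with h2 | h2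
      · exact h2
      · exact absurd (h1.symm.trans h2) (Ne.symm hk.2)
    refine ⟨?_, hσ⟩
    refine Equiv.ext fun π => ?_
    have := hact π
    rw [hσ] at this
    simpa using this
end

section
/- Let 𝐧 ∈ ℕ^q with an 𝐧-coloring c, and let G_𝐧 = H_{|𝐧|} ⋊_φ S_𝐧 act on S_{|𝐧|} by (h,σ).π = h(σπσ^{−1}). Then for all π, π′ ∈ S_{|𝐧|}, Π(π) = Π(π′) if and only if π and π′ lie in the same G_𝐧-orbit; consequently the map Π induces a bijection between the orbit space S_{|𝐧|}/G_𝐧 and the set 𝒜_𝐧 of q-colored partitions of 𝐧. -/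
open Finset
open scoped Classical

/-- `col(A) = ∑_𝐚 A(𝐚) • 𝐚`, the color count vector of a colored partition. -/
def colA {q : ℕ} (A : (Fin q → ℕ) →₀ ℕ) : Fin q → ℕ :=
  fun j => ∑ a ∈ A.support, A a * a j

/-- The set of `q`-colored partitions of `𝐧`. -/
def CPartSet {q : ℕ} (n : Fin q → ℕ) : Set ((Fin q → ℕ) →₀ ℕ) :=
  {A | A 0 = 0 ∧ colA A = n}

/-- `ε(κ) ∈ ℕ^q`: the color count of a set of elements under the coloring `c`. -/
def epsilonCount {N q : ℕ} (c : Fin N → Fin q) (s : Finset (Fin N)) : Fin q → ℕ :=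
  fun j => (s.filter fun y => c y = j).card

/-- `Π(π)`: the `q`-colored partition of a permutation `π`, recording for each color count
`𝐚` the number of cycles of `π` (including fixed points) with color count `𝐚`. -/
noncomputable def Ppi {N q : ℕ} (c : Fin N → Fin q) (π : Equiv.Perm (Fin N)) :
    (Fin q → ℕ) →₀ ℕ :=
  (∑ κ ∈ π.cycleFactorsFinset, Finsupp.single (epsilonCount c κ.support) 1) +
    ∑ y ∈ Finset.univ \ π.support, Finsupp.single (epsilonCount c {y}) 1

/-!
`Π(π)` only sees the partition of the points into cycles of `π`, together with the coloring.
An element `h` of `H` keeps this partition: its cycles for `h π` are unions of those for `π`,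
and they cannot be strictly coarser since `h π` is conjugate to `π`. A color-preserving
conjugation moves the cycles by a color-preserving bijection. Hence `Π` is constant on orbits.

Conversely, if `Π(π) = Π(π')`, first match the cycles of `π'` with those of `π` having the same
color counts, then match the points of each color inside matched cycles: this gives a
color-preserving `σ` such that `σ π' σ⁻¹` and `π` have the same cycles. Two permutations with the
same cycles have the same cycle type, so the transposition exchanging them lies in `H`.

Every colored partition `A` of `𝐧` occurs: label the points color-preservingly by
(cycle, color, index) as prescribed by `A`, and take a permutation whose cycles are the sets of
points with the same cycle label.
-/

theorem Fintype.exists_equiv_comp_eq_of_card_fiber_eq {α β γ : Type*} [Fintype α] [Fintype β]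
    [DecidableEq γ] {f : α → γ} {g : β → γ}
    (h : ∀ c, Fintype.card {a // f a = c} = Fintype.card {b // g b = c}) :
    ∃ e : α ≃ β, ∀ a, g (e a) = f a :=
  ⟨Equiv.ofFiberEquiv fun c => Fintype.equivOfCardEq (h c), Equiv.ofFiberEquiv_map _⟩

theorem Fintype.card_subtype_finset {α : Type*} (S : Finset α) (p : α → Prop) [DecidablePred p] :
    Fintype.card {B : S // p B} = #(S.filter p) := by
  rw [Fintype.card_subtype, univ_eq_attach, filter_attach, card_map, card_attach]

theorem card_filter_sigma_sigma_fin {X J : Type*} [Fintype X] [Fintype J] (m : X → J → ℕ)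
    (p : X → J → Prop) [∀ x, DecidablePred (p x)] :
    #(univ.filter fun t : Σ x, Σ j, Fin (m x j) => p t.1 t.2.1) =
      ∑ x, ∑ j ∈ univ.filter (p x), m x j := by
  rw [← univ_sigma_univ, filter_sigma, card_sigma]
  refine sum_congr rfl fun x _ => ?_
  rw [← univ_sigma_univ, filter_sigma, card_sigma, sum_filter]
  refine sum_congr rfl fun j _ => ?_
  split_ifs with hj <;> simp [hj]

theorem Function.Surjective.injective_fiber {α ι : Type*} [Fintype α] [DecidableEq ι]
    {g : α → ι} (hg : Function.Surjective g) :
    Function.Injective fun k => univ.filter (g · = k) := by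
  intro k k' h
  obtain ⟨i, rfl⟩ := hg k
  simpa using (Finset.ext_iff.1 h i).1 (by simp)

namespace Equiv.Perm

variable {α : Type*}

theorem sameCycle_permCongr {β : Type*} (e : α ≃ β) (p : Perm α) {x y : α} :
    (e.permCongr p).SameCycle (e x) (e y) ↔ p.SameCycle x y :=
  exists_congr fun k => by
    change (e.permCongrHom p ^ k) (e x) = e y ↔ _
    rw [← map_zpow]
    simp

theorem sameCycle_finRotate {n : ℕ} (i j : Fin n) : (finRotate n).SameCycle i j := by
  match n, i, j with
  | 1, i, j => rw [Subsingleton.elim i j]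
  | n + 2, i, j =>
    exact isCycle_finRotate.sameCycle (mem_support.1 (support_finRotate ▸ mem_univ i))
      (mem_support.1 (support_finRotate ▸ mem_univ j))

theorem sameCycle_sigmaCongrRight_iff {β : α → Type*} {τ : ∀ a, Perm (β a)}
    (hτ : ∀ a x y, (τ a).SameCycle x y) {x y : Σ a, β a} :
    (sigmaCongrRight τ).SameCycle x y ↔ x.1 = y.1 := by
  have hpow : ∀ k : ℤ, sigmaCongrRight τ ^ k = sigmaCongrRight (τ ^ k) := fun k =>
    (map_zpow (sigmaCongrRightHom β) τ k).symm
  obtain ⟨a, x⟩ := x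
  obtain ⟨b, y⟩ := y
  constructor
  · rintro ⟨k, hk⟩
    rw [hpow] at hk
    exact (congrArg Sigma.fst hk :)
  · rintro (rfl : a = b)
    obtain ⟨k, hk⟩ := hτ a x y
    exact ⟨k, by rw [hpow]; exact congrArg (Sigma.mk a) hk⟩

theorem exists_sameCycle_iff_eq {ι : Type*} [Fintype α] [DecidableEq ι] (g : α → ι) :
    ∃ π : Perm α, ∀ i j, π.SameCycle i j ↔ g i = g j := by
  let e : α ≃ Σ k, Fin (Fintype.card {a // g a = k}) :=
    (Equiv.sigmaFiberEquiv g).symm.trans (Equiv.sigmaCongrRight fun _ => Fintype.equivFin _)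
  refine ⟨e.symm.permCongr (sigmaCongrRight fun _ => finRotate _), fun i j => ?_⟩
  rw [← e.symm_apply_apply i, ← e.symm_apply_apply j, sameCycle_permCongr,
    sameCycle_sigmaCongrRight_iff fun _ => sameCycle_finRotate, e.symm_apply_apply,
    e.symm_apply_apply]
  simp [e]

variable [Fintype α] [DecidableEq α]

def cycleClass (π : Perm α) (i : α) : Finset α := univ.filter (π.SameCycle i)

def cycleClasses (π : Perm α) : Finset (Finset α) := univ.image π.cycleClass

variable {π ρ : Perm α} {i j : α} {B : Finset α}

@[simp]
theorem mem_cycleClass : j ∈ π.cycleClass i ↔ π.SameCycle i j := by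
  simp [cycleClass]

theorem cycleClass_eq_cycleClass_iff : π.cycleClass i = π.cycleClass j ↔ π.SameCycle i j :=
  ⟨fun h => mem_cycleClass.1 (h ▸ mem_cycleClass.2 (SameCycle.refl _ _)),
    fun h => Finset.ext fun k => by simp only [mem_cycleClass]; exact ⟨h.symm.trans, h.trans⟩⟩

theorem cycleClass_mem_cycleClasses (π : Perm α) (i : α) : π.cycleClass i ∈ π.cycleClasses :=
  mem_image_of_mem _ (mem_univ i)

theorem cycleClass_eq_iff_mem (hB : B ∈ π.cycleClasses) : π.cycleClass i = B ↔ i ∈ B := by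
  obtain ⟨k, -, rfl⟩ := mem_image.1 hB
  rw [cycleClass_eq_cycleClass_iff, mem_cycleClass, sameCycle_comm]

theorem cycleClass_of_mem_support (h : i ∈ π.support) :
    π.cycleClass i = (π.cycleOf i).support := by
  ext k
  rw [mem_cycleClass, mem_support_cycleOf_iff]
  exact ⟨fun hk => ⟨hk, h⟩, And.left⟩

theorem cycleClass_of_notMem_support (h : i ∉ π.support) : π.cycleClass i = {i} := by
  ext k
  rw [mem_cycleClass, mem_singleton]
  exact ⟨fun hk => (hk.eq_of_left (notMem_support.1 h)).symm, fun hk => hk ▸ SameCycle.refl _ _⟩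

theorem cycleClasses_eq_union (π : Perm α) :
    π.cycleClasses = π.cycleFactorsFinset.image support ∪ (univ \ π.support).image singleton := by
  ext B
  simp only [cycleClasses, mem_union, mem_image, mem_univ, true_and, mem_sdiff]
  constructor
  · rintro ⟨i, rfl⟩
    by_cases hi : i ∈ π.support
    · exact .inl ⟨π.cycleOf i, cycleOf_mem_cycleFactorsFinset_iff.2 hi,
        (cycleClass_of_mem_support hi).symm⟩
    · exact .inr ⟨i, hi, (cycleClass_of_notMem_support hi).symm⟩
  · rintro (⟨κ, hκ, rfl⟩ | ⟨i, hi, rfl⟩)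
    · obtain ⟨i, hi⟩ := (mem_cycleFactorsFinset_iff.1 hκ).1.nonempty_support
      refine ⟨i, ?_⟩
      rw [cycleClass_of_mem_support (mem_cycleFactorsFinset_support_le hκ hi),
        ← cycle_is_cycleOf hi hκ]
    · exact ⟨i, cycleClass_of_notMem_support hi⟩

theorem disjoint_image_support_image_singleton (π : Perm α) :
    _root_.Disjoint (π.cycleFactorsFinset.image support) ((univ \ π.support).image singleton) := by
  refine disjoint_left.2 fun B hB hB' => ?_
  obtain ⟨κ, hκ, rfl⟩ := mem_image.1 hB
  obtain ⟨i, -, hi⟩ := mem_image.1 hB'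
  have := (mem_cycleFactorsFinset_iff.1 hκ).1.two_le_card_support
  rw [← hi, card_singleton] at this
  omega

theorem filter_two_le_card_cycleClasses (π : Perm α) :
    π.cycleClasses.filter (2 ≤ #·) = π.cycleFactorsFinset.image support := by
  rw [cycleClasses_eq_union, filter_union, filter_true_of_mem, filter_false_of_mem, union_empty]
  · simp
  · rintro _ hB
    obtain ⟨κ, hκ, rfl⟩ := mem_image.1 hB
    exact (mem_cycleFactorsFinset_iff.1 hκ).1.two_le_card_support

theorem injOn_support_cycleFactorsFinset (π : Perm α) :
    Set.InjOn support (π.cycleFactorsFinset : Set (Perm α)) := by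
  intro κ hκ κ' hκ' h
  obtain ⟨x, hx⟩ := (mem_cycleFactorsFinset_iff.1 hκ).1.nonempty_support
  rw [cycle_is_cycleOf hx hκ, cycle_is_cycleOf (h ▸ hx) hκ']

theorem cycleType_eq_map_card_cycleClasses (π : Perm α) :
    π.cycleType = (π.cycleClasses.filter (2 ≤ #·)).val.map card := by
  rw [filter_two_le_card_cycleClasses, image_val_of_injOn (injOn_support_cycleFactorsFinset π),
    cycleType_def, Multiset.map_map]

theorem cycleClasses_congr (h : ∀ i j, π.SameCycle i j ↔ ρ.SameCycle i j) :
    π.cycleClasses = ρ.cycleClasses := by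
  have : π.cycleClass = ρ.cycleClass := funext fun i => Finset.ext fun j => by simp [h]
  rw [cycleClasses, cycleClasses, this]

theorem isConj_of_sameCycle_iff (h : ∀ i j, π.SameCycle i j ↔ ρ.SameCycle i j) : IsConj π ρ := by
  rw [isConj_iff_cycleType_eq, cycleType_eq_map_card_cycleClasses,
    cycleType_eq_map_card_cycleClasses, cycleClasses_congr h]

theorem cycleClass_conj (σ π : Perm α) (i : α) :
    (σ * π * σ⁻¹).cycleClass (σ i) = (π.cycleClass i).map σ.toEmbedding := by
  ext k
  simp [mem_map_equiv]

theorem cycleClasses_conj (σ π : Perm α) :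
    (σ * π * σ⁻¹).cycleClasses = π.cycleClasses.image (map σ.toEmbedding) := by
  rw [cycleClasses, cycleClasses, image_image]
  conv_lhs => rw [← image_univ_equiv σ, image_image]
  exact image_congr fun i _ => cycleClass_conj σ π i

/-- Conjugation preserves `∑ i, #(π.cycleClass i)`, so a conjugate of `π` cannot have strictly
coarser cycles. -/
theorem sameCycle_iff_of_isConj_of_le (hconj : IsConj π ρ)
    (hle : ∀ i j, π.SameCycle i j → ρ.SameCycle i j) (i j : α) :
    π.SameCycle i j ↔ ρ.SameCycle i j := by
  obtain ⟨g, rfl⟩ := isConj_iff.1 hconj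
  have hsub : ∀ i, π.cycleClass i ⊆ (g * π * g⁻¹).cycleClass i := fun i k hk =>
    mem_cycleClass.2 (hle i k (mem_cycleClass.1 hk))
  have hsum : ∑ i, #(π.cycleClass i) = ∑ i, #((g * π * g⁻¹).cycleClass i) :=
    calc ∑ i, #(π.cycleClass i) = ∑ i, #((g * π * g⁻¹).cycleClass (g i)) := by
          simp only [cycleClass_conj, card_map]
      _ = _ := Equiv.sum_comp g fun i => #((g * π * g⁻¹).cycleClass i)
  have hcard := (sum_eq_sum_iff_of_le fun i _ => card_le_card (hsub i)).1 hsum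
  rw [← mem_cycleClass, ← mem_cycleClass,
    eq_of_subset_of_card_le (hsub i) (hcard i (mem_univ i)).ge]

theorem sum_card_filter_cycleClasses (π : Perm α) (p : α → Prop) [DecidablePred p] :
    ∑ B ∈ π.cycleClasses, #(B.filter p) = #(univ.filter p) := by
  rw [card_eq_sum_card_fiberwise fun i _ => cycleClass_mem_cycleClasses π i]
  refine sum_congr rfl fun B hB => congrArg card (Finset.ext fun i => ?_)
  simp [cycleClass_eq_iff_mem hB, and_comm]

theorem cycleClasses_eq_image_fiber {ι : Type*} [Fintype ι] [DecidableEq ι] {g : α → ι}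
    (h : ∀ i j, π.SameCycle i j ↔ g i = g j) (hg : Function.Surjective g) :
    π.cycleClasses = univ.image fun k => univ.filter (g · = k) := by
  have hcls : ∀ i, π.cycleClass i = univ.filter (g · = g i) := fun i =>
    Finset.ext fun j => by simp [h, eq_comm]
  rw [cycleClasses, ← image_univ_of_surjective hg, image_image]
  exact image_congr fun i _ => hcls i

section Color

variable {κ : Type*} [DecidableEq κ]

def toCycleClasses (π : Perm α) (i : α) : π.cycleClasses :=
  ⟨π.cycleClass i, cycleClass_mem_cycleClasses π i⟩

theorem toCycleClasses_eq_iff {π : Perm α} {i j : α} :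
    π.toCycleClasses i = π.toCycleClasses j ↔ π.SameCycle i j :=
  Subtype.ext_iff.trans cycleClass_eq_cycleClass_iff

theorem card_fiber_toCycleClasses_color (c : α → κ) (π : Perm α) (B : π.cycleClasses) (j : κ) :
    Fintype.card {i // (π.toCycleClasses i, c i) = (B, j)} = #((B : Finset α).filter (c · = j)) := by
  rw [Fintype.card_subtype]
  congr 1
  ext i
  simp [toCycleClasses, Subtype.ext_iff, cycleClass_eq_iff_mem B.2]

theorem exists_color_perm_sameCycle_iff_of_equiv_cycleClasses (c : α → κ) {π π' : Perm α}
    (F : π'.cycleClasses ≃ π.cycleClasses)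
    (hF : ∀ B j, #((F B : Finset α).filter (c · = j)) = #((B : Finset α).filter (c · = j))) :
    ∃ σ : Perm α, (∀ i, c (σ i) = c i) ∧ ∀ i j, π'.SameCycle i j ↔ π.SameCycle (σ i) (σ j) := by
  obtain ⟨σ, hσ⟩ := Fintype.exists_equiv_comp_eq_of_card_fiber_eq
    (f := fun i => (F (π'.toCycleClasses i), c i)) (g := fun i => (π.toCycleClasses i, c i))
    fun ⟨B, j⟩ => by
      have e : {i // (F (π'.toCycleClasses i), c i) = (B, j)} ≃
          {i // (π'.toCycleClasses i, c i) = (F.symm B, j)} :=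
        Equiv.subtypeEquivRight fun i => by simp [F.eq_symm_apply]
      refine (Fintype.card_congr e).trans ?_
      rw [card_fiber_toCycleClasses_color, card_fiber_toCycleClasses_color, ← hF,
        F.apply_symm_apply]
  have hcls : ∀ i, π.toCycleClasses (σ i) = F (π'.toCycleClasses i) := fun i =>
    (Prod.mk.inj (hσ i)).1
  refine ⟨σ, fun i => (Prod.mk.inj (hσ i)).2, fun i j => ?_⟩
  rw [← toCycleClasses_eq_iff, ← toCycleClasses_eq_iff, hcls, hcls, F.apply_eq_iff_eq]

end Color

end Equiv.Perm

open Equiv.Perm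

section Ppi

variable {N q : ℕ} (c : Fin N → Fin q)

theorem Ppi_eq_sum_cycleClasses (π : Equiv.Perm (Fin N)) :
    Ppi c π = ∑ B ∈ π.cycleClasses, Finsupp.single (epsilonCount c B) 1 := by
  rw [cycleClasses_eq_union, sum_union (disjoint_image_support_image_singleton π),
    sum_image (injOn_support_cycleFactorsFinset π),
    sum_image fun _ _ _ _ h => singleton_injective h]
  rfl

theorem Ppi_apply (π : Equiv.Perm (Fin N)) (a : Fin q → ℕ) :
    Ppi c π a = #(π.cycleClasses.filter (epsilonCount c · = a)) := by
  rw [Ppi_eq_sum_cycleClasses, Finsupp.finsetSum_apply, card_filter]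
  exact sum_congr rfl fun B _ => Finsupp.single_apply

theorem Ppi_congr {π ρ : Equiv.Perm (Fin N)} (h : ∀ i j, π.SameCycle i j ↔ ρ.SameCycle i j) :
    Ppi c π = Ppi c ρ := by
  rw [Ppi_eq_sum_cycleClasses, Ppi_eq_sum_cycleClasses, cycleClasses_congr h]

theorem epsilonCount_map {σ : Equiv.Perm (Fin N)} (hσ : ∀ i, c (σ i) = c i) (B : Finset (Fin N)) :
    epsilonCount c (B.map σ.toEmbedding) = epsilonCount c B := by
  funext j
  simp only [epsilonCount, filter_map, card_map]
  congr 2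
  ext i
  simp [hσ]

theorem Ppi_conj {σ : Equiv.Perm (Fin N)} (hσ : ∀ i, c (σ i) = c i) (π : Equiv.Perm (Fin N)) :
    Ppi c (σ * π * σ⁻¹) = Ppi c π := by
  rw [Ppi_eq_sum_cycleClasses, Ppi_eq_sum_cycleClasses, cycleClasses_conj,
    sum_image fun _ _ _ _ h => map_injective _ h]
  simp only [epsilonCount_map c hσ]

theorem Ppi_eq_of_mem_Hset {h : Equiv.Perm (Equiv.Perm (Fin N))} (hh : h ∈ Hset N)
    (π : Equiv.Perm (Fin N)) : Ppi c (h π) = Ppi c π :=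
  (Ppi_congr c (sameCycle_iff_of_isConj_of_le (hh.1 π) (hh.2 π))).symm

theorem epsilonCount_ne_zero {B : Finset (Fin N)} {i : Fin N} (hi : i ∈ B) :
    epsilonCount c B ≠ 0 := by
  intro h
  have := congrFun h (c i)
  simp only [epsilonCount, Pi.zero_apply, card_eq_zero, filter_eq_empty_iff] at this
  exact this hi rfl

theorem Ppi_apply_zero (π : Equiv.Perm (Fin N)) : Ppi c π 0 = 0 := by
  rw [Ppi_apply, card_eq_zero, filter_eq_empty_iff]
  intro B hB
  obtain ⟨i, -, rfl⟩ := mem_image.1 hB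
  exact epsilonCount_ne_zero c (mem_cycleClass.2 (SameCycle.refl π i))

theorem colA_eq_linearCombination (A : (Fin q → ℕ) →₀ ℕ) :
    colA A = Finsupp.linearCombination ℕ id A := by
  ext j
  simp [colA, Finsupp.linearCombination_apply, Finsupp.sum, Finset.sum_apply]

theorem colA_Ppi {n : Fin q → ℕ} (hc : ∀ j, (univ.filter fun i => c i = j).card = n j)
    (π : Equiv.Perm (Fin N)) : colA (Ppi c π) = n := by
  ext j
  rw [colA_eq_linearCombination, Ppi_eq_sum_cycleClasses, map_sum]
  simp only [Finsupp.linearCombination_single, one_smul, id, Finset.sum_apply, epsilonCount]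
  rw [sum_card_filter_cycleClasses, hc]

theorem Ppi_eq_sum_fiber_of_sameCycle_iff {ι : Type*} [Fintype ι] [DecidableEq ι] {π : Equiv.Perm (Fin N)}
    {g : Fin N → ι} (h : ∀ i j, π.SameCycle i j ↔ g i = g j) (hg : Function.Surjective g) :
    Ppi c π = ∑ k, Finsupp.single (epsilonCount c (univ.filter (g · = k))) 1 := by
  rw [Ppi_eq_sum_cycleClasses, cycleClasses_eq_image_fiber h hg,
    sum_image fun _ _ _ _ h => hg.injective_fiber h]

theorem exists_color_perm_sameCycle_iff_of_Ppi_eq {π π' : Equiv.Perm (Fin N)}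
    (h : Ppi c π = Ppi c π') :
    ∃ σ : Equiv.Perm (Fin N), (∀ i, c (σ i) = c i) ∧
      ∀ i j, π'.SameCycle i j ↔ π.SameCycle (σ i) (σ j) := by
  obtain ⟨F, hF⟩ := Fintype.exists_equiv_comp_eq_of_card_fiber_eq
    (f := fun B : π'.cycleClasses => epsilonCount c B)
    (g := fun B : π.cycleClasses => epsilonCount c B) fun a => by
      rw [Fintype.card_subtype_finset _ (epsilonCount c · = a),
        Fintype.card_subtype_finset _ (epsilonCount c · = a), ← Ppi_apply, ← Ppi_apply, h]
  exact exists_color_perm_sameCycle_iff_of_equiv_cycleClasses c F fun B => congrFun (hF B)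

end Ppi

theorem swap_mem_Hset {N : ℕ} {ρ π : Equiv.Perm (Fin N)}
    (h : ∀ i j, ρ.SameCycle i j ↔ π.SameCycle i j) : Equiv.swap ρ π ∈ Hset N := by
  have key : ∀ τ i j, τ.SameCycle i j ↔ (Equiv.swap ρ π τ).SameCycle i j := by
    intro τ i j
    rw [Equiv.swap_apply_def]
    split_ifs with h₁ h₂
    · rw [h₁, h]
    · rw [h₂, h]
    · rfl
  exact ⟨fun τ => isConj_of_sameCycle_iff (key τ), fun τ i j => (key τ i j).1⟩

section Realization

/- A model of a permutation with colored partition `A`: for every color count `a` and each of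
its `A a` copies there is one cycle, consisting of `a j` points of color `j` for every `j`. -/

variable {q : ℕ}

abbrev CycleIndex (A : (Fin q → ℕ) →₀ ℕ) : Type := Σ a : A.support, Fin (A a)

abbrev PointIndex (A : (Fin q → ℕ) →₀ ℕ) : Type := Σ p : CycleIndex A, Σ j : Fin q, Fin (p.1.1 j)

theorem card_pointIndex_color (A : (Fin q → ℕ) →₀ ℕ) (j : Fin q) :
    #(univ.filter fun t : PointIndex A => t.2.1 = j) = colA A j := by
  calc _ = ∑ p : CycleIndex A, ∑ j' ∈ univ.filter (· = j), p.1.1 j' := by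
        convert card_filter_sigma_sigma_fin (fun (p : CycleIndex A) j => p.1.1 j) fun _ j' => j' = j
    _ = colA A j := by
      simp only [colA, Fintype.sum_sigma, filter_eq', mem_univ, if_true, sum_singleton, sum_const,
        card_univ, Fintype.card_fin, smul_eq_mul]
      exact sum_coe_sort A.support fun a => A a * a j

theorem card_pointIndex_cycle_color (A : (Fin q → ℕ) →₀ ℕ) (p : CycleIndex A) (j : Fin q) :
    #(univ.filter fun t : PointIndex A => t.1 = p ∧ t.2.1 = j) = p.1.1 j := by
  calc _ = ∑ p' : CycleIndex A, ∑ j' ∈ univ.filter (p' = p ∧ · = j), p'.1.1 j' := by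
        convert card_filter_sigma_sigma_fin (fun (p : CycleIndex A) j => p.1.1 j)
          fun p' j' => p' = p ∧ j' = j
    _ = p.1.1 j := by
      rw [Fintype.sum_eq_single p fun p' hp' => by simp [hp']]
      simp [filter_eq']

theorem exists_Ppi_eq {N : ℕ} {n : Fin q → ℕ} {c : Fin N → Fin q}
    (hc : ∀ j, (univ.filter fun i => c i = j).card = n j) {A : (Fin q → ℕ) →₀ ℕ}
    (hA : A ∈ CPartSet n) : ∃ π : Equiv.Perm (Fin N), Ppi c π = A := by
  obtain ⟨hA0, hAcol⟩ := hA
  obtain ⟨e, he⟩ := Fintype.exists_equiv_comp_eq_of_card_fiber_eq (f := c)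
    (g := fun t : PointIndex A => t.2.1) fun j => by
      rw [Fintype.card_subtype, Fintype.card_subtype, hc, card_pointIndex_color, hAcol]
  obtain ⟨π, hπ⟩ := exists_sameCycle_iff_eq fun i => (e i).1
  have hsurj : Function.Surjective fun i => (e i).1 := by
    intro p
    obtain ⟨j, hj⟩ : ∃ j, p.1.1 j ≠ 0 := by
      by_contra! h
      exact Finsupp.mem_support_iff.1 p.1.2 (funext h ▸ hA0)
    exact ⟨e.symm ⟨p, j, ⟨0, Nat.pos_of_ne_zero hj⟩⟩, by simp⟩
  have heps : ∀ p, epsilonCount c (univ.filter fun i => (e i).1 = p) = p.1.1 := by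
    intro p
    funext j
    rw [epsilonCount, filter_filter, ← card_pointIndex_cycle_color A p j, ← Fintype.card_subtype,
      ← Fintype.card_subtype]
    exact Fintype.card_congr (e.subtypeEquiv fun i => by rw [he])
  refine ⟨π, ?_⟩
  rw [Ppi_eq_sum_fiber_of_sameCycle_iff c hπ hsurj]
  simp only [heps, Fintype.sum_sigma, sum_const, card_univ, Fintype.card_fin, Finsupp.smul_single,
    smul_eq_mul, mul_one]
  rw [sum_coe_sort A.support fun a => Finsupp.single a (A a)]
  exact Finsupp.sum_single A

end Realization

/-- **The fibers of `Π` are exactly the orbits of `G_𝐧 = H_{|𝐧|} ⋊ S_𝐧` acting by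
`(h,σ).π = h(σπσ⁻¹)`; hence `Π` induces a bijection between the orbit space
`S_{|𝐧|}/G_𝐧` and the set `𝒜_𝐧` of `q`-colored partitions of `𝐧`.** -/
theorem Ppi_fibers_are_orbits (q : ℕ) (n : Fin q → ℕ) (c : Fin (∑ j, n j) → Fin q)
    (hc : ∀ j, (Finset.univ.filter fun i => c i = j).card = n j) :
    (∀ π π' : Equiv.Perm (Fin (∑ j, n j)),
      Ppi c π = Ppi c π' ↔
        ∃ h ∈ Hset (∑ j, n j), ∃ σ : Equiv.Perm (Fin (∑ j, n j)),
          (∀ i, c (σ i) = c i) ∧ π = h (σ * π' * σ⁻¹)) ∧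
    (∀ π : Equiv.Perm (Fin (∑ j, n j)), Ppi c π ∈ CPartSet n) ∧
    (∀ A ∈ CPartSet n, ∃ π : Equiv.Perm (Fin (∑ j, n j)), Ppi c π = A) := by
  refine ⟨fun π π' => ⟨fun h => ?_, ?_⟩, fun π => ⟨Ppi_apply_zero c π, colA_Ppi c hc π⟩,
    fun A hA => exists_Ppi_eq hc hA⟩
  · obtain ⟨σ, hσc, hσ⟩ := exists_color_perm_sameCycle_iff_of_Ppi_eq c h
    refine ⟨Equiv.swap (σ * π' * σ⁻¹) π, swap_mem_Hset fun i j => ?_, σ, hσc,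
      (Equiv.swap_apply_left _ _).symm⟩
    simp [hσ]
  · rintro ⟨h, hh, σ, hσ, rfl⟩
    rw [Ppi_eq_of_mem_Hset c hh, Ppi_conj c hσ]
end

section
/- For every q ≥ 1 and every 𝐧 ∈ ℕ^q_*, and every integer partition λ of |𝐧|, the sum of the multinomial coefficients M_𝐧(A) over all q-colored partitions A of 𝐧 with shape(A) = λ equals the multinomial coefficient of the second kind M₂(λ) = |𝐧|! ∏_i 1/(i^{λ_i} λ_i!). -/
open Finset Nat
open scoped Classical

/-- The multinomial coefficient `M_𝐧(A)` of a colored partition `A ⊨ 𝐧`. -/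
noncomputable def Mcoef {q : ℕ} (n : Fin q → ℕ) (A : (Fin q → ℕ) →₀ ℕ) : ℝ :=
  (∏ j, (n j)! : ℝ) *
    ∏ a ∈ A.support,
      ((Nat.multinomial Finset.univ a : ℝ) ^ A a / ((∑ j, a j : ℝ) ^ A a * (A a)!))

/-- `shape(A)_i`: the number of parts of `A` of total size `i`. -/
def shapeA {q : ℕ} (A : (Fin q → ℕ) →₀ ℕ) (i : ℕ) : ℕ :=
  ∑ a ∈ A.support.filter fun a => (∑ j, a j) = i, A a

/-! Sorting the parts of a colored partition `A` of shape `λ` by their size `i` turns `A` into a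
tuple `(k_i)_i`, where `k_i` is a composition of `λ_i` indexed by the vectors of size `i`.
Expanding `∏_i ((x₁ + ⋯ + x_q)^i)^{λ_i}` by the multinomial theorem, first inside and then
outside the powers `λ_i`, the tuple `(k_i)` contributes the monomial `x^col(A)` with coefficient
`M_𝐧(A) ∏_i i^{λ_i} λ_i! / 𝐧!`. The product equals `(x₁ + ⋯ + x_q)^{|𝐧|}`, whose coefficient
of `x^𝐧` is `|𝐧|! / 𝐧!`. -/

open MvPolynomial

def vecsOfSum (q i : ℕ) : Finset (Fin q → ℕ) := piAntidiag univ i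

lemma mem_vecsOfSum {q i : ℕ} {a : Fin q → ℕ} : a ∈ vecsOfSum q i ↔ ∑ j, a j = i := by
  simp [vecsOfSum]

lemma pairwiseDisjoint_vecsOfSum (q : ℕ) (s : Set ℕ) : s.PairwiseDisjoint (vecsOfSum q) :=
  fun _ _ _ _ hij => Finset.disjoint_left.2 fun _ hi hj =>
    hij ((mem_vecsOfSum.1 hi).symm.trans (mem_vecsOfSum.1 hj))

lemma sum_X_pow_eq_sum_monomial (R : Type*) [CommSemiring R] (q i : ℕ) :
    (∑ j, X j : MvPolynomial (Fin q) R) ^ i =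
      ∑ a ∈ vecsOfSum q i,
        monomial (Finsupp.equivFunOnFinite.symm a) (Nat.multinomial univ a : R) := by
  rw [Finset.sum_pow_eq_sum_piAntidiag]
  refine Finset.sum_congr rfl fun a _ => ?_
  rw [monomial_eq, Finsupp.prod_fintype _ _ fun j => pow_zero (X j), C_eq_coe_nat,
    Finsupp.coe_equivFunOnFinite_symm]

lemma pow_sum_X_pow_eq_sum_monomial (q i m : ℕ) :
    ((∑ j, X j : MvPolynomial (Fin q) ℕ) ^ i) ^ m =
      ∑ k ∈ piAntidiag (vecsOfSum q i) m,
        monomial (∑ a ∈ vecsOfSum q i, k a • Finsupp.equivFunOnFinite.symm a)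
          (Nat.multinomial (vecsOfSum q i) k *
            ∏ a ∈ vecsOfSum q i, Nat.multinomial univ a ^ k a) := by
  rw [sum_X_pow_eq_sum_monomial, Finset.sum_pow_eq_sum_piAntidiag]
  refine Finset.sum_congr rfl fun k _ => ?_
  simp_rw [monomial_pow, ← monomial_sum_prod, ← C_eq_coe_nat, C_mul_monomial, Nat.cast_id]

lemma coeff_sum_X_pow_equivFunOnFinite (R : Type*) [CommSemiring R] {q N : ℕ} {n : Fin q → ℕ}
    (hn : ∑ j, n j = N) :
    coeff (Finsupp.equivFunOnFinite.symm n) ((∑ j, X j : MvPolynomial (Fin q) R) ^ N) =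
      Nat.multinomial univ n := by
  rw [coeff_sum_X_pow_of_fintype, Finsupp.sum_fintype _ _ fun _ => rfl, if_pos (by simpa using hn),
    ← Finsupp.multinomial_of_support_subset (subset_univ _)]
  rfl

lemma sum_mem_Icc_of_mem_support {q : ℕ} {n : Fin q → ℕ} {A : (Fin q → ℕ) →₀ ℕ}
    (hA : A ∈ CPartSet n) {a : Fin q → ℕ} (ha : a ∈ A.support) :
    ∑ j, a j ∈ Icc 1 (∑ j, n j) := by
  obtain ⟨h0, hcol⟩ := hA
  have hAa : A a ≠ 0 := Finsupp.mem_support_iff.1 ha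
  refine Finset.mem_Icc.2
    ⟨Nat.one_le_iff_ne_zero.2 fun hs => ?_, Finset.sum_le_sum fun j _ => ?_⟩
  · exact hAa (funext (fun j => Finset.sum_eq_zero_iff.1 hs j (mem_univ j)) ▸ h0)
  · calc a j ≤ A a * a j := Nat.le_mul_of_pos_left _ (Nat.pos_of_ne_zero hAa)
      _ ≤ ∑ b ∈ A.support, A b * b j :=
          Finset.single_le_sum (f := fun b => A b * b j) (fun b _ => Nat.zero_le _) ha
      _ = n j := congrFun hcol j

lemma prod_pow_eq_prod_pow_shapeA {M : Type*} [CommMonoid M] {q : ℕ}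
    {A : (Fin q → ℕ) →₀ ℕ} {s : Finset ℕ} (hA : ∀ a ∈ A.support, ∑ j, a j ∈ s)
    (g : ℕ → M) :
    ∏ a ∈ A.support, g (∑ j, a j) ^ A a = ∏ i ∈ s, g i ^ shapeA A i := by
  rw [← Finset.prod_fiberwise_of_maps_to hA]
  refine Finset.prod_congr rfl fun i _ => ?_
  rw [shapeA, ← Finset.prod_pow_eq_pow_sum]
  exact Finset.prod_congr rfl fun a ha => by rw [(Finset.mem_filter.1 ha).2]

abbrev ShapeTuple (q N : ℕ) := Π i ∈ Icc 1 N, (Fin q → ℕ) → ℕ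

def shapeTuples (q N : ℕ) (l : ℕ → ℕ) : Finset (ShapeTuple q N) :=
  (Icc 1 N).pi fun i => piAntidiag (vecsOfSum q i) (l i)

namespace ShapeTuple

variable {q N : ℕ} {l : ℕ → ℕ}

lemma mem_shapeTuples {K : ShapeTuple q N} :
    K ∈ shapeTuples q N l ↔
      ∀ i (hi : i ∈ Icc 1 N), ∑ a ∈ vecsOfSum q i, K i hi a = l i ∧
        ∀ a, K i hi a ≠ 0 → a ∈ vecsOfSum q i := by
  simp only [shapeTuples, Finset.mem_pi, mem_piAntidiag]

noncomputable def color (K : ShapeTuple q N) : Fin q →₀ ℕ :=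
  ∑ i ∈ (Icc 1 N).attach,
    ∑ a ∈ vecsOfSum q i, K i.1 i.2 a • Finsupp.equivFunOnFinite.symm a

def weight (K : ShapeTuple q N) : ℕ :=
  ∏ i ∈ (Icc 1 N).attach, (Nat.multinomial (vecsOfSum q i) (K i.1 i.2) *
    ∏ a ∈ vecsOfSum q i, Nat.multinomial univ a ^ K i.1 i.2 a)

lemma prod_pow_sum_X_pow_eq_sum_monomial :
    ∏ i ∈ Icc 1 N, ((∑ j, X j : MvPolynomial (Fin q) ℕ) ^ i) ^ l i =
      ∑ K ∈ shapeTuples q N l, monomial K.color K.weight := by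
  simp_rw [pow_sum_X_pow_eq_sum_monomial, Finset.prod_sum, ← monomial_sum_prod]
  rfl

lemma sum_weight_of_color_eq {n : Fin q → ℕ} (hn : ∑ j, n j = N)
    (hl : ∑ i ∈ Icc 1 N, i * l i = N) :
    ∑ K ∈ shapeTuples q N l with K.color = Finsupp.equivFunOnFinite.symm n, K.weight =
      Nat.multinomial univ n := by
  have hpow : ∏ i ∈ Icc 1 N, ((∑ j, X j : MvPolynomial (Fin q) ℕ) ^ i) ^ l i =
      (∑ j, X j) ^ N := by
    simp_rw [← pow_mul, Finset.prod_pow_eq_pow_sum, hl]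
  have := congrArg (coeff (Finsupp.equivFunOnFinite.symm n)) hpow
  rw [prod_pow_sum_X_pow_eq_sum_monomial, coeff_sum_X_pow_equivFunOnFinite ℕ hn,
    coeff_sum] at this
  simpa only [coeff_monomial, Finset.sum_ite, Finset.sum_const_zero, add_zero,
    Nat.cast_id] using this

noncomputable def glue (K : ShapeTuple q N) : (Fin q → ℕ) →₀ ℕ :=
  Finsupp.onFinset ((Icc 1 N).biUnion (vecsOfSum q))
    (fun a => if h : ∑ j, a j ∈ Icc 1 N then K _ h a else 0)
    (fun a ha => by
      rw [Finset.mem_biUnion]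
      by_cases h : ∑ j, a j ∈ Icc 1 N
      · exact ⟨_, h, mem_vecsOfSum.2 rfl⟩
      · simp [h] at ha)

lemma glue_apply_of_mem (K : ShapeTuple q N) {i : ℕ} (hi : i ∈ Icc 1 N) {a : Fin q → ℕ}
    (ha : a ∈ vecsOfSum q i) : K.glue a = K i hi a := by
  obtain rfl := mem_vecsOfSum.1 ha
  exact dif_pos hi

lemma glue_apply_of_notMem (K : ShapeTuple q N) {a : Fin q → ℕ} (h : ∑ j, a j ∉ Icc 1 N) :
    K.glue a = 0 :=
  dif_neg h

lemma glue_zero (K : ShapeTuple q N) : K.glue 0 = 0 :=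
  K.glue_apply_of_notMem (by simp)

lemma support_glue_subset (K : ShapeTuple q N) :
    K.glue.support ⊆ (Icc 1 N).biUnion (vecsOfSum q) :=
  Finsupp.support_onFinset_subset

lemma sum_mem_Icc_of_mem_support_glue (K : ShapeTuple q N) {a : Fin q → ℕ}
    (ha : a ∈ K.glue.support) : ∑ j, a j ∈ Icc 1 N := by
  obtain ⟨i, hi, hai⟩ := Finset.mem_biUnion.1 (K.support_glue_subset ha)
  rwa [mem_vecsOfSum.1 hai]

lemma colA_glue (K : ShapeTuple q N) : colA K.glue = Finsupp.equivFunOnFinite K.color := by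
  funext j
  calc colA K.glue j = ∑ a ∈ (Icc 1 N).biUnion (vecsOfSum q), K.glue a * a j :=
        Finset.sum_subset K.support_glue_subset fun a _ ha => by
          rw [Finsupp.notMem_support_iff.1 ha, zero_mul]
    _ = ∑ i ∈ (Icc 1 N).attach, ∑ a ∈ vecsOfSum q i, K.glue a * a j := by
        rw [Finset.sum_biUnion (pairwiseDisjoint_vecsOfSum q _),
          ← Finset.sum_attach (Icc 1 N)]
    _ = Finsupp.equivFunOnFinite K.color j := by
        simp only [color, Finsupp.equivFunOnFinite_apply, Finsupp.finsetSum_apply,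
          Finsupp.smul_apply, Finsupp.coe_equivFunOnFinite_symm, smul_eq_mul]
        refine Finset.sum_congr rfl fun i _ => Finset.sum_congr rfl fun a ha => ?_
        rw [K.glue_apply_of_mem i.2 ha]

lemma sum_filter_glue_eq (K : ShapeTuple q N) {i : ℕ} (hi : i ∈ Icc 1 N) :
    ∑ a ∈ K.glue.support with ∑ j, a j = i, K.glue a = ∑ a ∈ vecsOfSum q i, K i hi a := by
  rw [Finset.sum_subset (fun a ha => mem_vecsOfSum.2 (Finset.mem_filter.1 ha).2)
    fun a ha hna => by_contra fun hc =>
      hna (Finset.mem_filter.2 ⟨Finsupp.mem_support_iff.2 hc, mem_vecsOfSum.1 ha⟩)]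
  exact Finset.sum_congr rfl fun a ha => K.glue_apply_of_mem hi ha

lemma shapeA_glue (hl : ∀ i, l i ≠ 0 → 1 ≤ i ∧ i ≤ N) {K : ShapeTuple q N}
    (hK : K ∈ shapeTuples q N l) (i : ℕ) : shapeA K.glue i = l i := by
  by_cases hi : i ∈ Icc 1 N
  · rw [shapeA, K.sum_filter_glue_eq hi, (mem_shapeTuples.1 hK i hi).1]
  · have hli : l i = 0 := by_contra fun h => hi (Finset.mem_Icc.2 (hl i h))
    rw [hli, shapeA, Finset.sum_eq_zero]
    intro a ha
    exact absurd ((Finset.mem_filter.1 ha).2 ▸ K.sum_mem_Icc_of_mem_support_glue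
      (Finset.mem_filter.1 ha).1) hi

lemma glue_injOn : Set.InjOn glue (shapeTuples q N l : Set (ShapeTuple q N)) := by
  intro K₁ h₁ K₂ h₂ h
  funext i hi a
  by_cases ha : a ∈ vecsOfSum q i
  · rw [← K₁.glue_apply_of_mem hi ha, ← K₂.glue_apply_of_mem hi ha, h]
  · rw [not_imp_comm.1 ((mem_shapeTuples.1 h₁ i hi).2 a) ha,
      not_imp_comm.1 ((mem_shapeTuples.1 h₂ i hi).2 a) ha]

lemma exists_glue_eq {n : Fin q → ℕ} {A : (Fin q → ℕ) →₀ ℕ} (hA : A ∈ CPartSet n)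
    (hshape : ∀ i, shapeA A i = l i) :
    ∃ K ∈ shapeTuples q (∑ j, n j) l, K.glue = A := by
  refine ⟨fun i _ a => if a ∈ vecsOfSum q i then A a else 0,
    mem_shapeTuples.2 fun i hi => ⟨?_, fun a h => by_contra fun hc => h (if_neg hc)⟩, ?_⟩
  · rw [Finset.sum_congr rfl fun a ha => if_pos ha, ← hshape i, shapeA]
    refine (Finset.sum_subset (fun a ha => mem_vecsOfSum.2 (Finset.mem_filter.1 ha).2)
      fun a ha hna => by_contra fun hc => hna ?_).symm
    exact Finset.mem_filter.2 ⟨Finsupp.mem_support_iff.2 hc, mem_vecsOfSum.1 ha⟩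
  · ext a
    by_cases h : ∑ j, a j ∈ Icc 1 (∑ j, n j)
    · rw [glue_apply_of_mem _ h (mem_vecsOfSum.2 rfl), if_pos (mem_vecsOfSum.2 rfl)]
    · rw [glue_apply_of_notMem _ h]
      exact (Finsupp.notMem_support_iff.1 fun ha => h (sum_mem_Icc_of_mem_support hA ha)).symm

lemma cast_weight_eq {K : ShapeTuple q N} (hK : K ∈ shapeTuples q N l) :
    (K.weight : ℝ) = (∏ i ∈ Icc 1 N, ((l i)! : ℝ)) *
      ∏ a ∈ K.glue.support, (Nat.multinomial univ a : ℝ) ^ K.glue a / (K.glue a)! := by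
  have hmultinomial : ∀ i (hi : i ∈ Icc 1 N), (Nat.multinomial (vecsOfSum q i) (K i hi) : ℝ) =
      (l i)! / ∏ a ∈ vecsOfSum q i, ((K i hi a)! : ℝ) := by
    intro i hi
    rw [eq_div_iff (Finset.prod_ne_zero_iff.2 fun a _ => by positivity), mul_comm,
      ← (mem_shapeTuples.1 hK i hi).1]
    exact_mod_cast Nat.multinomial_spec (vecsOfSum q i) (K i hi)
  calc (K.weight : ℝ)
      = ∏ i ∈ (Icc 1 N).attach, (((l i)! : ℝ) * ∏ a ∈ vecsOfSum q i,
          (Nat.multinomial univ a : ℝ) ^ K.glue a / (K.glue a)!) := by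
        push_cast [weight]
        refine Finset.prod_congr rfl fun i _ => ?_
        rw [hmultinomial i.1 i.2, div_mul_eq_mul_div, mul_div_assoc, ← Finset.prod_div_distrib]
        exact congrArg _ (Finset.prod_congr rfl fun a ha => by rw [K.glue_apply_of_mem i.2 ha])
    _ = _ := by
        rw [Finset.prod_mul_distrib, Finset.prod_attach (Icc 1 N) fun i => ((l i)! : ℝ),
          Finset.prod_attach (Icc 1 N) fun i => ∏ a ∈ vecsOfSum q i,
            ((Nat.multinomial univ a : ℝ) ^ K.glue a / (K.glue a)!),
          ← Finset.prod_biUnion (pairwiseDisjoint_vecsOfSum q _)]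
        refine congrArg _ (Finset.prod_subset K.support_glue_subset fun a _ ha => ?_).symm
        simp [Finsupp.notMem_support_iff.1 ha]

lemma Mcoef_glue (n : Fin q → ℕ) (hl : ∀ i, l i ≠ 0 → 1 ≤ i ∧ i ≤ N)
    {K : ShapeTuple q N} (hK : K ∈ shapeTuples q N l) :
    Mcoef n K.glue = (∏ j, ((n j)! : ℝ)) * (∏ i ∈ Icc 1 N, ((i : ℝ)⁻¹) ^ l i) /
      (∏ i ∈ Icc 1 N, ((l i)! : ℝ)) * K.weight := by
  have hsplit : ∏ a ∈ K.glue.support, (Nat.multinomial univ a : ℝ) ^ K.glue a /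
        ((∑ j, a j : ℝ) ^ K.glue a * (K.glue a)!) =
      (∏ a ∈ K.glue.support, (((∑ j, a j : ℕ) : ℝ)⁻¹) ^ K.glue a) *
        ∏ a ∈ K.glue.support, (Nat.multinomial univ a : ℝ) ^ K.glue a / (K.glue a)! := by
    rw [← Finset.prod_mul_distrib]
    refine Finset.prod_congr rfl fun a _ => ?_
    push_cast
    ring
  have hsizes : ∏ a ∈ K.glue.support, (((∑ j, a j : ℕ) : ℝ)⁻¹) ^ K.glue a =
      ∏ i ∈ Icc 1 N, ((i : ℝ)⁻¹) ^ l i := by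
    rw [prod_pow_eq_prod_pow_shapeA (fun _ => K.sum_mem_Icc_of_mem_support_glue)
      fun i => (i : ℝ)⁻¹]
    exact Finset.prod_congr rfl fun i _ => by rw [shapeA_glue hl hK]
  rw [Mcoef, hsplit, hsizes, cast_weight_eq hK]
  field_simp

lemma setOf_shapeA_eq_image_glue {n : Fin q → ℕ}
    (hl : ∀ i, l i ≠ 0 → 1 ≤ i ∧ i ≤ ∑ j, n j) :
    {A | A ∈ CPartSet n ∧ ∀ i, shapeA A i = l i} =
      ({K ∈ shapeTuples q (∑ j, n j) l | K.color = Finsupp.equivFunOnFinite.symm n}.image glue :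
        Finset ((Fin q → ℕ) →₀ ℕ)) := by
  ext A
  simp only [Set.mem_ofPred_eq, coe_image, coe_filter, Set.mem_image]
  constructor
  · rintro ⟨hA, hshape⟩
    obtain ⟨K, hK, rfl⟩ := exists_glue_eq hA hshape
    exact ⟨K, ⟨hK, (Equiv.eq_symm_apply _).2 (K.colA_glue ▸ hA.2)⟩, rfl⟩
  · rintro ⟨K, ⟨hK, hcolor⟩, rfl⟩
    exact ⟨⟨K.glue_zero, by rw [K.colA_glue, hcolor, Equiv.apply_symm_apply]⟩,
      shapeA_glue hl hK⟩

end ShapeTuple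

theorem sum_Mcoef_over_shape_general (q : ℕ) (n : Fin q → ℕ)
    (l : ℕ → ℕ) (hl : ∀ i, l i ≠ 0 → 1 ≤ i ∧ i ≤ ∑ j, n j)
    (hl2 : ∑ i ∈ Finset.Icc 1 (∑ j, n j), i * l i = ∑ j, n j) :
    ∑ᶠ A ∈ {A : (Fin q → ℕ) →₀ ℕ | A ∈ CPartSet n ∧ ∀ i, shapeA A i = l i},
      Mcoef n A =
      ((∑ j, n j)! : ℝ) *
        ∏ i ∈ Finset.Icc 1 (∑ j, n j), 1 / ((i : ℝ) ^ l i * (l i)!) := by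
  rw [ShapeTuple.setOf_shapeA_eq_image_glue hl, finsum_mem_coe_finset,
    Finset.sum_image fun K₁ h₁ K₂ h₂ =>
      ShapeTuple.glue_injOn (mem_filter.1 h₁).1 (mem_filter.1 h₂).1,
    Finset.sum_congr rfl fun K hK => ShapeTuple.Mcoef_glue n hl (mem_filter.1 hK).1,
    ← Finset.mul_sum, ← Nat.cast_sum, ShapeTuple.sum_weight_of_color_eq rfl hl2]
  have hmultinomial : (∏ j, ((n j)! : ℝ)) * Nat.multinomial univ n = (∑ j, n j)! := by
    exact_mod_cast Nat.multinomial_spec univ n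
  rw [← hmultinomial]
  simp only [one_div, mul_inv, Finset.prod_mul_distrib, Finset.prod_inv_distrib, inv_pow]
  ring

/-- **Summing multinomial coefficients over a fixed shape.** For every `q ≥ 1`, every
`𝐧 ∈ ℕ^q_*` and every integer partition `λ ⊢ |𝐧|` (recorded as `l i` = number of parts of
size `i`), the sum of `M_𝐧(A)` over all `q`-colored partitions `A ⊨ 𝐧` with
`shape(A) = λ` equals `M₂(λ) = |𝐧|! ∏_i 1/(i^{λ_i} λ_i!)`. -/
theorem sum_Mcoef_over_shape (q : ℕ) (hq : 1 ≤ q) (n : Fin q → ℕ) (hn : n ≠ 0)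
    (l : ℕ → ℕ) (hl : ∀ i, l i ≠ 0 → 1 ≤ i ∧ i ≤ ∑ j, n j)
    (hl2 : ∑ i ∈ Finset.Icc 1 (∑ j, n j), i * l i = ∑ j, n j) :
    ∑ᶠ A ∈ {A : (Fin q → ℕ) →₀ ℕ | A ∈ CPartSet n ∧ ∀ i, shapeA A i = l i},
      Mcoef n A =
      ((∑ j, n j)! : ℝ) *
        ∏ i ∈ Finset.Icc 1 (∑ j, n j), 1 / ((i : ℝ) ^ l i * (l i)!) :=
  sum_Mcoef_over_shape_general q n l hl hl2
end

section
/- For all integers k,q,n ≥ 1, every α ∈ ℝ₊^k and every k×q real matrix S, summing the refined cycle index evaluations over all 𝐧 ∈ ℕ^q with |𝐧| = n yields the ordinary cycle index polynomial of S_n evaluated at power sums of the row sums of S: ∑_{𝐧 ∈ ℕ^q, |𝐧| = n} Z_𝐧(Ω_𝐧[S;α]) = Z_n(row(S)·α, row(S)^{◇2}·α, …, row(S)^{◇n}·α), where row(S) ∈ ℝ^k is the vector of row sums of S, v^{◇m} denotes the entrywise m-th power, and v·α = ∑_i v_i α_i. -/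
open Finset Nat
open scoped Classical

/-- `Z_𝐧(𝐭) = (1/𝐧!) ∑_{A ⊨ 𝐧} M_𝐧(A) ∏_{𝐚 ∈ supp A} t_𝐚^{A(𝐚)}`. -/
noncomputable def Zpoly {q : ℕ} (n : Fin q → ℕ) (t : (Fin q → ℕ) → ℝ) : ℝ :=
  (∏ j, (n j)! : ℝ)⁻¹ *
    ∑ᶠ A ∈ CPartSet n, Mcoef n A * ∏ a ∈ A.support, t a ^ A a

/-- `M₂(λ) = n! ∏_i 1/(i^{λ_i} λ_i!)`, the multinomial coefficient of the second kind of
an integer partition `λ ⊢ n` (with `λ_i` parts of size `i`). -/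
noncomputable def M2 (n : ℕ) (lam : Nat.Partition n) : ℝ :=
  (n ! : ℝ) * ∏ i ∈ Finset.Icc 1 n, 1 / ((i : ℝ) ^ lam.parts.count i * (lam.parts.count i)!)

/-- The cycle index polynomial of the symmetric group `S_n`:
`Z_n(t₁,…,t_n) = (1/n!) ∑_{λ ⊢ n} M₂(λ) t₁^{λ₁}⋯t_n^{λ_n}`. -/
noncomputable def cycleIndexSn (n : ℕ) (t : ℕ → ℝ) : ℝ :=
  ((n ! : ℝ))⁻¹ *
    ∑ lam : Nat.Partition n, M2 n lam * ∏ i ∈ Finset.Icc 1 n, t i ^ lam.parts.count i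

namespace CIAux

variable {q : ℕ}

/-- weight of a color vector -/
def w (a : Fin q → ℕ) : ℕ := ∑ j, a j

lemma mem_piAntidiag_univ {m : ℕ} {a : Fin q → ℕ} :
    a ∈ piAntidiag (univ : Finset (Fin q)) m ↔ w a = m := by
  simp [Finset.mem_piAntidiag, w]

lemma one_le_w {a : Fin q → ℕ} (ha : a ≠ 0) : 1 ≤ w a := by
  rcases Nat.eq_zero_or_pos (w a) with h | h
  · exfalso
    apply ha
    funext j
    have := (Finset.sum_eq_zero_iff.mp h) j (mem_univ j)
    simpa using this
  · exact h

/-- the finset of possible parts -/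
def T (n : ℕ) : Finset (Fin q → ℕ) := (Icc 1 n).biUnion fun i => piAntidiag univ i

lemma mem_T {n : ℕ} {a : Fin q → ℕ} : a ∈ T n ↔ 1 ≤ w a ∧ w a ≤ n := by
  simp only [T, Finset.mem_biUnion, Finset.mem_Icc, mem_piAntidiag_univ]
  constructor
  · rintro ⟨i, ⟨h1, h2⟩, rfl⟩; exact ⟨h1, h2⟩
  · rintro ⟨h1, h2⟩; exact ⟨w a, ⟨h1, h2⟩, rfl⟩

/-- the set of colored partitions of total weight `n` -/
def U (n : ℕ) : Set ((Fin q → ℕ) →₀ ℕ) :=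
  {A | A 0 = 0 ∧ ∑ a ∈ A.support, A a * w a = n}

lemma support_subset_T {n : ℕ} {A : (Fin q → ℕ) →₀ ℕ} (hA : A ∈ U n) :
    A.support ⊆ T n := by
  intro a ha
  have hane : A a ≠ 0 := Finsupp.mem_support_iff.mp ha
  have ha0 : a ≠ 0 := by
    rintro rfl; exact hane hA.1
  have h1 : 1 ≤ w a := one_le_w ha0
  refine mem_T.mpr ⟨h1, ?_⟩
  calc w a ≤ A a * w a := Nat.le_mul_of_pos_left _ (Nat.pos_of_ne_zero hane)
    _ ≤ ∑ b ∈ A.support, A b * w b := Finset.single_le_sum (f := fun b => A b * w b) (fun _ _ => Nat.zero_le _) ha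
    _ = n := hA.2

lemma U_finite (n : ℕ) : (U (q := q) n).Finite := by
  have : U (q := q) n ⊆ (fun (A : (Fin q → ℕ) →₀ ℕ) => (A : (Fin q → ℕ) → ℕ)) ⁻¹'
      ↑((Finset.range (n+1)).biUnion fun N => piAntidiag (T (q := q) n) N) := by
    intro A hA
    simp only [Set.mem_preimage, Finset.coe_biUnion, Set.mem_iUnion, Finset.mem_coe,
      Finset.mem_biUnion, Finset.mem_range]
    refine ⟨∑ a ∈ T n, A a, ?_, ?_⟩
    · have hsub : ∑ a ∈ T n, A a = ∑ a ∈ A.support, A a := by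
        refine (Finset.sum_subset (support_subset_T hA) ?_).symm
        intro a _ ha
        exact Finsupp.notMem_support_iff.mp ha
      have hle : ∑ a ∈ A.support, A a ≤ ∑ a ∈ A.support, A a * w a := by
        apply Finset.sum_le_sum
        intro a ha
        have := (mem_T.mp (support_subset_T hA ha)).1
        calc A a = A a * 1 := (mul_one _).symm
          _ ≤ A a * w a := Nat.mul_le_mul_left _ this
      rw [hsub]; have h2 := hA.2; omega
    · refine Finset.mem_piAntidiag.mpr ⟨rfl, ?_⟩
      intro a ha
      exact support_subset_T hA (Finsupp.mem_support_iff.mpr ha)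
  exact Set.Finite.subset (Set.Finite.preimage
    (Set.injOn_of_injective (DFunLike.coe_injective)) (Finset.finite_toSet _)) this

noncomputable def Ufin (q n : ℕ) : Finset ((Fin q → ℕ) →₀ ℕ) := (U_finite (q := q) n).toFinset

lemma mem_Ufin {n : ℕ} {A : (Fin q → ℕ) →₀ ℕ} :
    A ∈ Ufin q n ↔ A 0 = 0 ∧ ∑ a ∈ A.support, A a * w a = n := by
  simp [Ufin, U, Set.Finite.mem_toFinset]

/-- counts of a partition vanish outside `Icc 1 n`. -/
lemma count_eq_zero_of_notMem_Icc {n : ℕ} (lam : n.Partition) {i : ℕ}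
    (h : i ∉ Icc 1 n) : lam.parts.count i = 0 := by
  by_contra hc
  have hi : i ∈ lam.parts := Multiset.count_ne_zero.mp hc
  have h1 : 1 ≤ i := lam.parts_pos hi
  have h2 : i ≤ n := by
    have := Multiset.single_le_sum (fun x _ => Nat.zero_le x) i hi
    rwa [lam.parts_sum] at this
  exact h (Finset.mem_Icc.mpr ⟨h1, h2⟩)

lemma sum_Icc_count_mul {n : ℕ} (lam : n.Partition) :
    ∑ i ∈ Icc 1 n, lam.parts.count i * i = n := by
  have h0 : lam.parts.toFinset ⊆ Icc 1 n := by
    intro i hi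
    rw [Multiset.mem_toFinset] at hi
    refine Finset.mem_Icc.mpr ⟨lam.parts_pos hi, ?_⟩
    have := Multiset.single_le_sum (fun x _ => Nat.zero_le x) i hi
    rwa [lam.parts_sum] at this
  have h1 : ∑ i ∈ lam.parts.toFinset, lam.parts.count i * i = lam.parts.sum := by
    conv_rhs => rw [← Multiset.toFinset_sum_count_nsmul_eq lam.parts]
    rw [Multiset.sum_sum]
    apply Finset.sum_congr rfl
    intro i _
    rw [Multiset.sum_nsmul, Multiset.sum_singleton]
    simp [smul_eq_mul]
  calc ∑ i ∈ Icc 1 n, lam.parts.count i * i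
      = ∑ i ∈ lam.parts.toFinset, lam.parts.count i * i := by
        refine (Finset.sum_subset h0 ?_).symm
        intro i _ hi
        rw [Multiset.count_eq_zero_of_notMem (by simpa [Multiset.mem_toFinset] using hi)]
        simp
    _ = lam.parts.sum := h1
    _ = n := lam.parts_sum

/-- the partition induced by a colored partition (junk value off `U n`) -/
noncomputable def pOf (n : ℕ) (A : (Fin q → ℕ) →₀ ℕ) : n.Partition :=
  if h : A ∈ U n then
    { parts := A.support.val.bind fun a => Multiset.replicate (A a) (w a)
      parts_pos := by
        intro i hi
        rw [Multiset.mem_bind] at hi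
        obtain ⟨a, ha, hi⟩ := hi
        have hia := Multiset.eq_of_mem_replicate hi
        subst hia
        have ha' : a ≠ 0 := by
          rintro rfl
          have : A 0 ≠ 0 := Finsupp.mem_support_iff.mp (by simpa using ha)
          exact this h.1
        exact one_le_w ha'
      parts_sum := by
        rw [Multiset.sum_bind]
        simp only [Multiset.sum_replicate, smul_eq_mul]
        exact h.2 }
  else
    { parts := Multiset.replicate n 1
      parts_pos := by
        intro i hi
        rw [Multiset.eq_of_mem_replicate hi]
        norm_num
      parts_sum := by simp }

lemma count_pOf {n : ℕ} {A : (Fin q → ℕ) →₀ ℕ} (hA : A ∈ U n) (i : ℕ) :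
    (pOf n A).parts.count i = ∑ a ∈ A.support.filter (fun a => w a = i), A a := by
  rw [pOf, dif_pos hA]
  show (A.support.val.bind fun a => Multiset.replicate (A a) (w a)).count i = _
  rw [Multiset.count_bind]
  simp only [Multiset.count_replicate]
  rw [Finset.sum_filter]
  rfl

lemma wsum_eq_sum_colA (A : (Fin q → ℕ) →₀ ℕ) :
    ∑ a ∈ A.support, A a * w a = ∑ j, colA A j := by
  unfold colA w
  simp_rw [Finset.mul_sum]
  rw [Finset.sum_comm]

lemma pow_div_eq_sum (y : (Fin q → ℕ) → ℝ) {m c : ℕ} (hm : 1 ≤ m) :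
    (∑ a ∈ piAntidiag (univ : Finset (Fin q)) m, y a) ^ c / ((m : ℝ) ^ c * (c)!) =
    ∑ f ∈ piAntidiag (piAntidiag (univ : Finset (Fin q)) m) c,
      ∏ a ∈ piAntidiag (univ : Finset (Fin q)) m,
        y a ^ f a / ((m : ℝ) ^ f a * (f a)!) := by
  rw [Finset.sum_pow_eq_sum_piAntidiag, Finset.sum_div]
  apply Finset.sum_congr rfl
  intro f hf
  obtain ⟨hsum, -⟩ := Finset.mem_piAntidiag.mp hf
  set F := piAntidiag (univ : Finset (Fin q)) m with hF
  have hPne : (∏ a ∈ F, ((f a)! : ℝ)) ≠ 0 := by positivity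
  have hcne : ((c)! : ℝ) ≠ 0 := by positivity
  have hmne : (m : ℝ) ≠ 0 := Nat.cast_ne_zero.mpr (by omega)
  have hmult : (Nat.multinomial F f : ℝ) = (c)! / ∏ a ∈ F, ((f a)! : ℝ) := by
    have hspec := Nat.multinomial_spec F f
    have hcast := congrArg (Nat.cast : ℕ → ℝ) hspec
    push_cast at hcast
    rw [hsum] at hcast
    rw [eq_div_iff hPne, mul_comm]
    exact hcast
  rw [hmult]
  rw [Finset.prod_div_distrib, Finset.prod_mul_distrib, Finset.prod_pow_eq_pow_sum, hsum]
  field_simp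
lemma pairwiseDisjoint_piAntidiag (n : ℕ) :
    (↑(Icc 1 n) : Set ℕ).PairwiseDisjoint
      (fun i => piAntidiag (univ : Finset (Fin q)) i) := by
  intro i _ j _ hij
  simp only [Function.onFun, Finset.disjoint_left]
  intro a hai haj
  exact hij ((mem_piAntidiag_univ.mp hai).symm.trans (mem_piAntidiag_univ.mp haj))

lemma sum_restrict (A : (Fin q → ℕ) →₀ ℕ) (i : ℕ) :
    ∑ a ∈ piAntidiag (univ : Finset (Fin q)) i, (if w a = i then A a else 0) =
    ∑ a ∈ A.support.filter (fun a => w a = i), A a := by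
  rw [Finset.sum_congr rfl (fun a ha => if_pos (mem_piAntidiag_univ.mp ha))]
  refine (Finset.sum_subset ?_ ?_).symm
  · intro a ha
    rw [Finset.mem_filter] at ha
    exact mem_piAntidiag_univ.mpr ha.2
  · intro a ha hna
    rw [Finset.mem_filter] at hna
    push_neg at hna
    by_contra h
    exact h (Finsupp.notMem_support_iff.mp
      (fun hs => h (by exact absurd (hna hs (mem_piAntidiag_univ.mp ha)) (by simp))))

noncomputable def toA (n : ℕ) (p : (i : ℕ) → i ∈ Icc 1 n → (Fin q → ℕ) → ℕ) :
    (Fin q → ℕ) →₀ ℕ :=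
  Finsupp.onFinset (T n) (fun a => if h : w a ∈ Icc 1 n then p (w a) h a else 0)
    (fun a ha => by
      rw [mem_T, ← Finset.mem_Icc]
      by_contra hc
      exact ha (dif_neg hc))

lemma toA_apply_of {n : ℕ} (p : (i : ℕ) → i ∈ Icc 1 n → (Fin q → ℕ) → ℕ)
    {a : Fin q → ℕ} {i : ℕ} (hi : i ∈ Icc 1 n) (hw : w a = i) :
    toA n p a = p i hi a := by
  subst hw
  exact dif_pos hi

lemma toA_apply_not {n : ℕ} (p : (i : ℕ) → i ∈ Icc 1 n → (Fin q → ℕ) → ℕ)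
    {a : Fin q → ℕ} (h : w a ∉ Icc 1 n) : toA n p a = 0 :=
  dif_neg h

lemma fiber_sum (y : (Fin q → ℕ) → ℝ) (n : ℕ) (lam : n.Partition) :
    ∑ A ∈ (Ufin q n).filter (fun A => pOf n A = lam),
      ∏ a ∈ A.support, y a ^ A a / ((w a : ℝ) ^ A a * (A a)!) =
    ∑ p ∈ (Icc 1 n).pi
        (fun i => piAntidiag (piAntidiag (univ : Finset (Fin q)) i) (lam.parts.count i)),
      ∏ x ∈ (Icc 1 n).attach,
        ∏ a ∈ piAntidiag (univ : Finset (Fin q)) (x : ℕ),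
          y a ^ p x.1 x.2 a / (((x : ℕ) : ℝ) ^ p x.1 x.2 a * (p x.1 x.2 a)!) := by
  refine Finset.sum_nbij' (fun A => fun i _ a => if w a = i then A a else 0) (toA n)
      ?_ ?_ ?_ ?_ ?_
  · -- forward maps to pi
    intro A hA
    rw [Finset.mem_filter] at hA
    obtain ⟨hAU, hlam⟩ := hA
    rw [mem_Ufin] at hAU
    have hU : A ∈ U n := ⟨hAU.1, hAU.2⟩
    rw [Finset.mem_pi]
    intro i hi
    rw [Finset.mem_piAntidiag]
    constructor
    · rw [sum_restrict, ← count_pOf hU, hlam]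
    · intro a ha
      rw [mem_piAntidiag_univ]
      by_contra h
      exact ha (if_neg h)
  · -- backward maps to filter
    intro p hp
    rw [Finset.mem_pi] at hp
    have hsum : ∀ i (hi : i ∈ Icc 1 n),
        ∑ a ∈ piAntidiag (univ : Finset (Fin q)) i, p i hi a = lam.parts.count i :=
      fun i hi => (Finset.mem_piAntidiag.mp (hp i hi)).1
    have hmemp : ∀ i (hi : i ∈ Icc 1 n) a, p i hi a ≠ 0 → w a = i :=
      fun i hi a ha => mem_piAntidiag_univ.mp ((Finset.mem_piAntidiag.mp (hp i hi)).2 a ha)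
    have hA0 : toA n p 0 = 0 := by
      have hw0 : w (0 : Fin q → ℕ) = 0 := by simp [w]
      refine dif_neg ?_
      rw [hw0]
      simp
    have hsupp : (toA n p).support ⊆ T n := Finsupp.support_onFinset_subset
    have hwsum : ∑ a ∈ (toA n p).support, toA n p a * w a = n := by
      rw [Finset.sum_subset hsupp
        (fun a _ ha => by rw [Finsupp.notMem_support_iff.mp ha, zero_mul])]
      rw [T, Finset.sum_biUnion (pairwiseDisjoint_piAntidiag n)]
      have hinner : ∀ i ∈ Icc 1 n,
          ∑ a ∈ piAntidiag (univ : Finset (Fin q)) i, toA n p a * w a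
            = lam.parts.count i * i := by
        intro i hi
        rw [← hsum i hi, Finset.sum_mul]
        apply Finset.sum_congr rfl
        intro a ha
        have hw := mem_piAntidiag_univ.mp ha
        rw [toA_apply_of p hi hw, hw]
      rw [Finset.sum_congr rfl hinner, sum_Icc_count_mul lam]
    have hU : toA n p ∈ U n := ⟨hA0, hwsum⟩
    have hpof : pOf n (toA n p) = lam := by
      apply Nat.Partition.ext
      ext i
      rw [count_pOf hU i]
      by_cases hi : i ∈ Icc 1 n
      · rw [← sum_restrict, ← hsum i hi]
        apply Finset.sum_congr rfl
        intro a ha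
        have hw := mem_piAntidiag_univ.mp ha
        rw [if_pos hw, toA_apply_of p hi hw]
      · rw [count_eq_zero_of_notMem_Icc lam hi]
        apply Finset.sum_eq_zero
        intro a ha
        rw [Finset.mem_filter] at ha
        exfalso
        have hmt := mem_T.mp (hsupp ha.1)
        rw [ha.2] at hmt
        exact hi (Finset.mem_Icc.mpr hmt)
    rw [Finset.mem_filter, mem_Ufin]
    exact ⟨⟨hA0, hwsum⟩, hpof⟩
  · -- left inverse
    intro A hA
    rw [Finset.mem_filter, mem_Ufin] at hA
    have hU : A ∈ U n := ⟨hA.1.1, hA.1.2⟩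
    ext a
    by_cases h : w a ∈ Icc 1 n
    · rw [toA_apply_of _ h rfl]
      exact if_pos rfl
    · rw [toA_apply_not _ h]
      symm
      by_contra hne
      exact h (mem_T.mp (support_subset_T hU (Finsupp.mem_support_iff.mpr hne)) |>
        (fun hmt => Finset.mem_Icc.mpr hmt))
  · -- right inverse
    intro p hp
    rw [Finset.mem_pi] at hp
    funext i hi a
    by_cases h : w a = i
    · exact (if_pos h).trans (toA_apply_of p hi h)
    · refine (if_neg h).trans ?_
      by_contra hne
      have hne' : p i hi a ≠ 0 := fun h0 => hne h0.symm
      exact h (mem_piAntidiag_univ.mp ((Finset.mem_piAntidiag.mp (hp i hi)).2 a hne'))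
  · -- summand equality
    intro A hA
    rw [Finset.mem_filter, mem_Ufin] at hA
    have hU : A ∈ U n := ⟨hA.1.1, hA.1.2⟩
    dsimp only
    calc ∏ a ∈ A.support, y a ^ A a / ((w a : ℝ) ^ A a * (A a)!)
        = ∏ a ∈ T n, y a ^ A a / ((w a : ℝ) ^ A a * (A a)!) := by
          apply Finset.prod_subset (support_subset_T hU)
          intro a _ ha
          rw [Finsupp.notMem_support_iff.mp ha]
          simp
      _ = ∏ i ∈ Icc 1 n, ∏ a ∈ piAntidiag (univ : Finset (Fin q)) i,
            y a ^ A a / ((w a : ℝ) ^ A a * (A a)!) := by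
          rw [T, Finset.prod_biUnion (pairwiseDisjoint_piAntidiag n)]
      _ = ∏ x ∈ (Icc 1 n).attach, ∏ a ∈ piAntidiag (univ : Finset (Fin q)) (x : ℕ),
            y a ^ A a / ((w a : ℝ) ^ A a * (A a)!) :=
          (Finset.prod_attach _ _).symm
      _ = _ := by
          apply Finset.prod_congr rfl
          intro x _
          apply Finset.prod_congr rfl
          intro a ha
          have hw := mem_piAntidiag_univ.mp ha
          rw [if_pos hw, hw]
lemma key_identity (y : (Fin q → ℕ) → ℝ) (n : ℕ) :
    ∑ A ∈ Ufin q n, ∏ a ∈ A.support, y a ^ A a / ((w a : ℝ) ^ A a * (A a)!) =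
    ∑ lam : n.Partition, ∏ i ∈ Icc 1 n,
      (∑ a ∈ piAntidiag (univ : Finset (Fin q)) i, y a) ^ lam.parts.count i /
        ((i : ℝ) ^ lam.parts.count i * (lam.parts.count i)!) := by
  rw [← Finset.sum_fiberwise (Ufin q n) (pOf n)
    (fun A => ∏ a ∈ A.support, y a ^ A a / ((w a : ℝ) ^ A a * (A a)!))]
  apply Finset.sum_congr rfl
  intro lam _
  rw [fiber_sum y n lam]
  have hps := Finset.prod_sum (s := Icc 1 n)
    (t := fun i => piAntidiag (piAntidiag (univ : Finset (Fin q)) i) (lam.parts.count i))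
    (f := fun i g => ∏ a ∈ piAntidiag (univ : Finset (Fin q)) i,
      y a ^ g a / ((i : ℝ) ^ g a * (g a)!))
  refine Eq.trans (hps.symm) ?_
  apply Finset.prod_congr rfl
  intro i hi
  exact (pow_div_eq_sum y (Finset.mem_Icc.mp hi).1).symm
lemma CPartSet_eq {n : ℕ} {v : Fin q → ℕ} (hv : ∑ j, v j = n) :
    CPartSet v = ↑((Ufin q n).filter (fun A => colA A = v)) := by
  ext A
  simp only [CPartSet, Set.mem_setOf_eq, Finset.coe_filter, mem_Ufin]
  constructor
  · rintro ⟨h0, hc⟩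
    refine ⟨⟨h0, ?_⟩, hc⟩
    rw [wsum_eq_sum_colA, hc]
    exact hv
  · rintro ⟨⟨h0, _⟩, hc⟩
    exact ⟨h0, hc⟩

lemma Zpoly_eq {n : ℕ} (t' : (Fin q → ℕ) → ℝ) {v : Fin q → ℕ} (hv : ∑ j, v j = n) :
    Zpoly v t' = ∑ A ∈ (Ufin q n).filter (fun A => colA A = v),
      ∏ a ∈ A.support,
        ((Nat.multinomial Finset.univ a : ℝ) * t' a) ^ A a /
          ((w a : ℝ) ^ A a * (A a)!) := by
  rw [Zpoly, CPartSet_eq hv, finsum_mem_coe_finset, Finset.mul_sum]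
  apply Finset.sum_congr rfl
  intro A hA
  rw [Mcoef]
  have hP : (∏ j, ((v j)! : ℝ)) ≠ 0 := by positivity
  rw [mul_assoc, inv_mul_cancel_left₀ hP, ← Finset.prod_mul_distrib]
  apply Finset.prod_congr rfl
  intro a _
  have hcast : (∑ j, (a j : ℝ)) = ((w a : ℕ) : ℝ) := by
    rw [w]
    push_cast
    rfl
  rw [hcast, mul_pow]
  ring

lemma LHS_eq (t' : (Fin q → ℕ) → ℝ) (n : ℕ) :
    ∑ᶠ v ∈ {v : Fin q → ℕ | ∑ j, v j = n}, Zpoly v t' =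
    ∑ A ∈ Ufin q n,
      ∏ a ∈ A.support,
        ((Nat.multinomial Finset.univ a : ℝ) * t' a) ^ A a /
          ((w a : ℝ) ^ A a * (A a)!) := by
  have hset : {v : Fin q → ℕ | ∑ j, v j = n} =
      ↑(piAntidiag (univ : Finset (Fin q)) n) := by
    ext v
    simp [Finset.mem_piAntidiag]
  rw [hset, finsum_mem_coe_finset]
  rw [Finset.sum_congr rfl (fun v hv => Zpoly_eq t' (mem_piAntidiag_univ.mp hv))]
  refine Finset.sum_fiberwise_of_maps_to ?_ _
  intro A hA
  rw [mem_Ufin] at hA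
  refine mem_piAntidiag_univ.mpr ?_
  show ∑ j, colA A j = n
  rw [← wsum_eq_sum_colA]
  exact hA.2

lemma RHS_eq (t : ℕ → ℝ) (n : ℕ) :
    cycleIndexSn n t = ∑ lam : n.Partition, ∏ i ∈ Icc 1 n,
      t i ^ lam.parts.count i /
        ((i : ℝ) ^ lam.parts.count i * (lam.parts.count i)!) := by
  rw [cycleIndexSn, Finset.mul_sum]
  apply Finset.sum_congr rfl
  intro lam _
  rw [M2]
  have hne : ((n)! : ℝ) ≠ 0 := by positivity
  rw [mul_assoc, inv_mul_cancel_left₀ hne, ← Finset.prod_mul_distrib]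
  apply Finset.prod_congr rfl
  intro i _
  rw [one_div]
  ring

lemma t_eq_Y {k : ℕ} (S : Matrix (Fin k) (Fin q) ℝ) (α : Fin k → ℝ) (m : ℕ) :
    ∑ i, (∑ j, S i j) ^ m * α i =
      ∑ a ∈ piAntidiag (univ : Finset (Fin q)) m,
        (Nat.multinomial Finset.univ a : ℝ) * ∑ i, (∏ j, S i j ^ a j) * α i := by
  have hexp : ∀ i : Fin k, (∑ j, S i j) ^ m =
      ∑ a ∈ piAntidiag (univ : Finset (Fin q)) m,
        (Nat.multinomial Finset.univ a : ℝ) * ∏ j, S i j ^ a j :=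
    fun i => Finset.sum_pow_eq_sum_piAntidiag univ (fun j => S i j) m
  simp_rw [hexp, Finset.sum_mul, Finset.mul_sum, mul_assoc]
  rw [Finset.sum_comm]

end CIAux

/-- **Aggregating the refined cycle indices.** For `k,q,n ≥ 1`, `α ∈ ℝ₊^k` and a real
`k×q` matrix `S`, `∑_{|𝐧| = n} Z_𝐧(Ω_𝐧[S;α]) = Z_n(row(S)·α, row(S)^{◇2}·α, …)`,
where `row(S)` is the vector of row sums of `S`. -/
theorem sum_Zpoly_eq_cycleIndex (k q n : ℕ) (hk : 1 ≤ k) (hq : 1 ≤ q) (hn : 1 ≤ n)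
    (α : Fin k → ℝ) (hα : ∀ i, 0 < α i) (S : Matrix (Fin k) (Fin q) ℝ) :
    ∑ᶠ v ∈ {v : Fin q → ℕ | ∑ j, v j = n},
      Zpoly v (fun a => ∑ i, (∏ j, S i j ^ a j) * α i) =
      cycleIndexSn n (fun m => ∑ i, (∑ j, S i j) ^ m * α i) := by
  rw [CIAux.LHS_eq (fun a => ∑ i, (∏ j, S i j ^ a j) * α i) n,
    CIAux.RHS_eq (fun m => ∑ i, (∑ j, S i j) ^ m * α i) n]
  refine Eq.trans (CIAux.key_identity
    (fun a => (Nat.multinomial Finset.univ a : ℝ) * ∑ i, (∏ j, S i j ^ a j) * α i) n) ?_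
  apply Finset.sum_congr rfl
  intro lam _
  apply Finset.prod_congr rfl
  intro i hi
  rw [← CIAux.t_eq_Y S α i]
end

section
/- For every n,q ≥ 1, every θ > 0 and every p ∈ Δ^{q−1}, the polychromatic Ewens sampling formula Esf_{θ,p}^n is a probability distribution on 𝒜_n; that is, ∑_{A ∈ 𝒜_n} (n!/(θ)_n) θ^{‖A‖} (p^{col A}/(col A)!) M_{col A}(A) = 1. -/
open Finset Nat
open scoped Classical

/-- `‖A‖ = ∑_𝐚 A(𝐚)`, the number of parts of a colored partition. -/
def asize {q : ℕ} (A : (Fin q → ℕ) →₀ ℕ) : ℕ := ∑ a ∈ A.support, A a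

/-- The polychromatic Ewens sampling formula
`Esf_{θ,p}^n(A) = (n!/(θ)_n) θ^{‖A‖} (p^{col A}/(col A)!) M_{col A}(A)`. -/
noncomputable def esf {q : ℕ} (θ : ℝ) (p : Fin q → ℝ) (n : ℕ)
    (A : (Fin q → ℕ) →₀ ℕ) : ℝ :=
  (n ! : ℝ) / (ascPochhammer ℝ n).eval θ * θ ^ asize A *
    ((∏ j, p j ^ colA A j) / ∏ j, ((colA A j)! : ℝ)) * Mcoef (colA A) A


section ESFAux
variable {q : ℕ}

lemma one_le_sum_of_ne_zero {a : Fin q → ℕ} (ha : a ≠ 0) : 1 ≤ ∑ j, a j := by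
  rcases Nat.eq_zero_or_pos (∑ j, a j) with h | h
  · exact absurd (funext fun j => Finset.sum_eq_zero_iff.mp h j (mem_univ j)) ha
  · exact h

/-- weight of a single part -/
noncomputable def wgt (θ : ℝ) (p : Fin q → ℝ) (a : Fin q → ℕ) : ℝ :=
  θ * (∏ j, p j ^ a j) * (Nat.multinomial Finset.univ a : ℝ) / ((∑ j, a j : ℕ) : ℝ)

/-- product of part weights over a fixed finset -/
noncomputable def tU (θ : ℝ) (p : Fin q → ℝ) (U : Finset (Fin q → ℕ))
    (A : (Fin q → ℕ) →₀ ℕ) : ℝ :=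
  ∏ a ∈ U, wgt θ p a ^ A a / ((A a)! : ℝ)

noncomputable def tA (θ : ℝ) (p : Fin q → ℝ) (A : (Fin q → ℕ) →₀ ℕ) : ℝ :=
  tU θ p A.support A

lemma tU_eq {θ : ℝ} {p : Fin q → ℝ} {U : Finset (Fin q → ℕ)} {A : (Fin q → ℕ) →₀ ℕ}
    (h : A.support ⊆ U) : tU θ p U A = tA θ p A :=
  (Finset.prod_subset h (fun x _ hx => by
    rw [Finsupp.notMem_support_iff.mp hx]; simp)).symm

def wsum (A : (Fin q → ℕ) →₀ ℕ) : ℕ := ∑ a ∈ A.support, A a * (∑ j, a j)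

lemma wsumU {U : Finset (Fin q → ℕ)} {A : (Fin q → ℕ) →₀ ℕ} (h : A.support ⊆ U) :
    ∑ a ∈ U, A a * (∑ j, a j) = wsum A :=
  (Finset.sum_subset h (fun x _ hx => by
    rw [Finsupp.notMem_support_iff.mp hx]; simp)).symm

def Ufin (q n : ℕ) : Finset (Fin q → ℕ) :=
  (Finset.Icc 1 n).biUnion fun m => Finset.piAntidiag Finset.univ m

lemma mem_Ufin {n : ℕ} {a : Fin q → ℕ} :
    a ∈ Ufin q n ↔ 1 ≤ ∑ j, a j ∧ ∑ j, a j ≤ n := by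
  simp only [Ufin, Finset.mem_biUnion, Finset.mem_piAntidiag, Finset.mem_Icc, mem_univ,
    implies_true, and_true]
  constructor
  · rintro ⟨m, ⟨h1, h2⟩, rfl⟩; exact ⟨h1, h2⟩
  · rintro ⟨h1, h2⟩; exact ⟨∑ j, a j, ⟨h1, h2⟩, rfl⟩

def partn (q n : ℕ) : Finset ((Fin q → ℕ) →₀ ℕ) :=
  ((Finset.range (n+1)).biUnion fun k => (Ufin q n).finsuppAntidiag k).filter
    fun A => wsum A = n

lemma mem_partn {n : ℕ} {A : (Fin q → ℕ) →₀ ℕ} :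
    A ∈ partn q n ↔ A 0 = 0 ∧ wsum A = n := by
  rw [partn, Finset.mem_filter, Finset.mem_biUnion]
  constructor
  · rintro ⟨⟨k, hk, hA⟩, hw⟩
    rw [Finset.mem_finsuppAntidiag] at hA
    refine ⟨?_, hw⟩
    by_contra h0
    have : (0 : Fin q → ℕ) ∈ A.support := Finsupp.mem_support_iff.mpr h0
    have := mem_Ufin.mp (hA.2 this)
    simp at this
  · rintro ⟨h0, hw⟩
    have hsupp : A.support ⊆ Ufin q n := by
      intro a ha
      have haA : A a ≠ 0 := Finsupp.mem_support_iff.mp ha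
      have ha0 : a ≠ 0 := fun h => haA (by rw [h]; exact h0)
      have h1 : 1 ≤ ∑ j, a j := one_le_sum_of_ne_zero ha0
      have h2 : A a * (∑ j, a j) ≤ wsum A :=
        Finset.single_le_sum (f := fun a => A a * (∑ j, a j)) (fun _ _ => Nat.zero_le _) ha
      have h3 : ∑ j, a j ≤ A a * (∑ j, a j) :=
        Nat.le_mul_of_pos_left _ (Nat.pos_of_ne_zero haA)
      exact mem_Ufin.mpr ⟨h1, by omega⟩
    have hle : ∑ a ∈ A.support, A a ≤ wsum A := by
      refine Finset.sum_le_sum fun a ha => ?_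
      have haA : A a ≠ 0 := Finsupp.mem_support_iff.mp ha
      have ha0 : a ≠ 0 := fun h => haA (by rw [h]; exact h0)
      exact Nat.le_mul_of_pos_right _ (one_le_sum_of_ne_zero ha0)
    refine ⟨⟨∑ a ∈ A.support, A a, Finset.mem_range.mpr (by omega), ?_⟩, hw⟩
    rw [Finset.mem_finsuppAntidiag]
    exact ⟨(Finset.sum_subset hsupp (fun x _ hx => Finsupp.notMem_support_iff.mp hx)).symm,
      hsupp⟩

end ESFAux
section Aux2
variable {q : ℕ}

noncomputable def addPart (A' : (Fin q → ℕ) →₀ ℕ) (a : Fin q → ℕ) : (Fin q → ℕ) →₀ ℕ :=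
  A' + Finsupp.single a 1

noncomputable def subPart (A : (Fin q → ℕ) →₀ ℕ) (a : Fin q → ℕ) : (Fin q → ℕ) →₀ ℕ :=
  A - Finsupp.single a 1

lemma addPart_apply (A' : (Fin q → ℕ) →₀ ℕ) (a b : Fin q → ℕ) :
    addPart A' a b = if a = b then A' b + 1 else A' b := by
  show A' b + Finsupp.single a 1 b = _
  rw [Finsupp.single_apply]
  split_ifs <;> omega

lemma subPart_apply (A : (Fin q → ℕ) →₀ ℕ) (a b : Fin q → ℕ) :
    subPart A a b = if a = b then A b - 1 else A b := by
  show A b - Finsupp.single a 1 b = _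
  rw [Finsupp.single_apply]
  split_ifs <;> omega

lemma subPart_addPart {A : (Fin q → ℕ) →₀ ℕ} {a : Fin q → ℕ} (h : 1 ≤ A a) :
    addPart (subPart A a) a = A := by
  ext b
  rcases eq_or_ne a b with rfl | hb
  · rw [addPart_apply, if_pos rfl, subPart_apply, if_pos rfl]; omega
  · rw [addPart_apply, if_neg hb, subPart_apply, if_neg hb]

lemma addPart_subPart (A' : (Fin q → ℕ) →₀ ℕ) (a : Fin q → ℕ) :
    subPart (addPart A' a) a = A' := by
  ext b
  rcases eq_or_ne a b with rfl | hb
  · rw [subPart_apply, if_pos rfl, addPart_apply, if_pos rfl]; omega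
  · rw [subPart_apply, if_neg hb, addPart_apply, if_neg hb]

lemma addPart_support_subset {A' : (Fin q → ℕ) →₀ ℕ} {a : Fin q → ℕ} :
    (addPart A' a).support ⊆ insert a A'.support := by
  intro b hb
  have hb' : addPart A' a b ≠ 0 := Finsupp.mem_support_iff.mp hb
  rw [addPart_apply] at hb'
  rcases eq_or_ne a b with rfl | h
  · exact Finset.mem_insert_self _ _
  · rw [if_neg h] at hb'
    exact Finset.mem_insert_of_mem (Finsupp.mem_support_iff.mpr hb')

lemma support_subPart_subset {A : (Fin q → ℕ) →₀ ℕ} {a : Fin q → ℕ} :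
    (subPart A a).support ⊆ A.support := by
  intro b hb
  have hb' : subPart A a b ≠ 0 := Finsupp.mem_support_iff.mp hb
  rw [subPart_apply] at hb'
  refine Finsupp.mem_support_iff.mpr ?_
  split_ifs at hb' <;> omega

lemma pow_succ_div_factorial (x : ℝ) (k : ℕ) :
    x ^ (k+1) / (((k+1)! : ℕ) : ℝ) = (x ^ k / (k ! : ℝ)) * (x / ((k:ℝ) + 1)) := by
  have h1 : ((k:ℝ) + 1) ≠ 0 := by positivity
  have h2 : ((k ! : ℕ) : ℝ) ≠ 0 := Nat.cast_ne_zero.mpr (Nat.factorial_ne_zero k)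
  rw [Nat.factorial_succ, pow_succ]
  push_cast
  rw [mul_comm (x^k) x, mul_div_mul_comm, mul_comm]

lemma tU_addPart {θ : ℝ} {p : Fin q → ℝ} {U : Finset (Fin q → ℕ)}
    {A' : (Fin q → ℕ) →₀ ℕ} {a : Fin q → ℕ} (haU : a ∈ U) :
    tU θ p U (addPart A' a) = tU θ p U A' * (wgt θ p a / ((A' a : ℝ) + 1)) := by
  unfold tU
  rw [← Finset.mul_prod_erase U _ haU, ← Finset.mul_prod_erase U
    (fun b => wgt θ p b ^ A' b / ((A' b)! : ℝ)) haU]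
  have h1 : ∀ b ∈ U.erase a,
      wgt θ p b ^ (addPart A' a b) / (((addPart A' a b)! : ℕ) : ℝ)
        = wgt θ p b ^ A' b / ((A' b)! : ℝ) := by
    intro b hb
    have hba : b ≠ a := Finset.ne_of_mem_erase hb
    rw [addPart_apply, if_neg (Ne.symm hba)]
  rw [Finset.prod_congr rfl h1, addPart_apply, if_pos rfl, pow_succ_div_factorial]
  ring

lemma wsum_addPart (A' : (Fin q → ℕ) →₀ ℕ) (a : Fin q → ℕ) :
    wsum (addPart A' a) = wsum A' + ∑ j, a j := by
  set U := insert a A'.support with hU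
  have hs1 : (addPart A' a).support ⊆ U := addPart_support_subset
  have hs2 : A'.support ⊆ U := Finset.subset_insert _ _
  rw [← wsumU hs1, ← wsumU hs2]
  have h : ∀ b ∈ U, addPart A' a b * (∑ j, b j)
      = A' b * (∑ j, b j) + (if a = b then (∑ j, b j) else 0) := by
    intro b _
    rw [addPart_apply]
    split_ifs <;> ring
  rw [Finset.sum_congr rfl h, Finset.sum_add_distrib]
  congr 1
  rw [Finset.sum_eq_single_of_mem a (Finset.mem_insert_self a _)]
  · rw [if_pos rfl]
  · intro b _ hba
    rw [if_neg (Ne.symm hba)]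

end Aux2
section Aux3
variable {q : ℕ}

noncomputable def Fsum (θ : ℝ) (p : Fin q → ℝ) (n : ℕ) : ℝ := ∑ A ∈ partn q n, tA θ p A

lemma partn_zero : partn q 0 = {0} := by
  ext A
  rw [mem_partn, Finset.mem_singleton]
  constructor
  · rintro ⟨h0, hw⟩
    have hsupp : A.support = ∅ := by
      by_contra h
      obtain ⟨a, ha⟩ := Finset.nonempty_of_ne_empty h
      have haA : A a ≠ 0 := Finsupp.mem_support_iff.mp ha
      have ha0 : a ≠ 0 := fun hh => haA (by rw [hh]; exact h0)
      have h2 : A a * (∑ j, a j) ≤ wsum A :=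
        Finset.single_le_sum (f := fun a => A a * (∑ j, a j)) (fun _ _ => Nat.zero_le _) ha
      have h3 := one_le_sum_of_ne_zero ha0
      have h4 := Nat.pos_of_ne_zero haA
      have h5 : 1 ≤ A a * (∑ j, a j) := Nat.one_le_iff_ne_zero.mpr
        (Nat.mul_ne_zero haA (by omega))
      omega
    exact Finsupp.support_eq_empty.mp hsupp
  · rintro rfl
    refine ⟨rfl, ?_⟩
    simp [wsum]

lemma tA_zero (θ : ℝ) (p : Fin q → ℝ) : tA θ p 0 = 1 := by simp [tA, tU]

lemma Fsum_zero (θ : ℝ) (p : Fin q → ℝ) : Fsum θ p 0 = 1 := by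
  rw [Fsum, partn_zero, Finset.sum_singleton, tA_zero]

lemma sum_colA {A : (Fin q → ℕ) →₀ ℕ} : ∑ j, colA A j = wsum A := by
  simp only [colA, wsum]
  rw [Finset.sum_comm]
  exact Finset.sum_congr rfl fun a _ => (Finset.mul_sum _ _ _).symm

noncomputable def aPoch (θ : ℝ) (k : ℕ) : ℝ := (ascPochhammer ℝ k).eval θ / (k ! : ℝ)

lemma aPoch_zero (θ : ℝ) : aPoch θ 0 = 1 := by simp [aPoch]

lemma aPoch_rec (θ : ℝ) (n : ℕ) :
    ((n:ℝ)+1) * aPoch θ (n+1) = θ * ∑ k ∈ Finset.range (n+1), aPoch θ k := by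
  induction n with
  | zero => simp [aPoch, ascPochhammer_one]
  | succ n ih =>
    rw [Finset.sum_range_succ, mul_add, ← ih]
    have h1 : aPoch θ (n+2) = aPoch θ (n+1) * (θ + ((n:ℝ)+1)) / ((n:ℝ)+2) := by
      rw [aPoch, aPoch, show n+2 = (n+1)+1 from rfl, ascPochhammer_succ_eval,
        Nat.factorial_succ, div_mul_eq_mul_div, div_div]
      push_cast
      congr 1
      ring
    rw [h1]
    have hne : ((n:ℝ)+2) ≠ 0 := by positivity
    have hc : ((n:ℝ)+1)+1 = (n:ℝ)+2 := by ring
    push_cast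
    rw [hc, mul_comm ((n:ℝ)+2), div_mul_cancel₀ _ hne]
    ring

end Aux3
section Aux4
variable {q : ℕ}

lemma Fsum_rec (θ : ℝ) (p : Fin q → ℝ) (hp1 : ∑ j, p j = 1) (n : ℕ) :
    ((n:ℝ)+1) * Fsum θ p (n+1) = θ * ∑ k ∈ Finset.range (n+1), Fsum θ p k := by
  have step1 : ((n:ℝ)+1) * Fsum θ p (n+1)
      = ∑ A ∈ partn q (n+1), ∑ a ∈ A.support,
          ((A a * (∑ j, a j) : ℕ) : ℝ) * tA θ p A := by
    rw [Fsum, Finset.mul_sum]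
    refine Finset.sum_congr rfl fun A hA => ?_
    have hw := (mem_partn.mp hA).2
    rw [← Finset.sum_mul, ← Nat.cast_sum,
      show ∑ a ∈ A.support, A a * (∑ j, a j) = wsum A from rfl, hw]
    push_cast; ring
  have step2 : ∑ A ∈ partn q (n+1), ∑ a ∈ A.support,
        ((A a * (∑ j, a j) : ℕ) : ℝ) * tA θ p A
      = ∑ x ∈ (Ufin q (n+1)).sigma (fun a => partn q (n+1 - ∑ j, a j)),
          ((∑ j, x.1 j : ℕ) : ℝ) * wgt θ p x.1 * tA θ p x.2 := by
    rw [← Finset.sum_sigma (partn q (n+1)) (fun A => A.support)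
      (fun x => ((x.1 x.2 * (∑ j, x.2 j) : ℕ) : ℝ) * tA θ p x.1)]
    refine Finset.sum_nbij' (fun x => ⟨x.2, subPart x.1 x.2⟩)
      (fun x => ⟨addPart x.2 x.1, x.1⟩) ?_ ?_ ?_ ?_ ?_
    · rintro ⟨A, a⟩ hx
      dsimp only
      rw [Finset.mem_sigma] at hx ⊢
      obtain ⟨hA, ha⟩ := hx
      obtain ⟨h0, hw⟩ := mem_partn.mp hA
      have haA : 1 ≤ A a := Nat.pos_of_ne_zero (Finsupp.mem_support_iff.mp ha)
      have ha0 : a ≠ 0 := fun hh => (Finsupp.mem_support_iff.mp ha) (by rw [hh]; exact h0)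
      have hs1 : 1 ≤ ∑ j, a j := one_le_sum_of_ne_zero ha0
      have hws : wsum (subPart A a) + ∑ j, a j = n + 1 := by
        rw [← wsum_addPart, subPart_addPart haA, hw]
      have hm1 : a ∈ Ufin q (n+1) := mem_Ufin.mpr ⟨hs1, by omega⟩
      have h00 : (0 : Fin q → ℕ) ∉ A.support := fun hm => Finsupp.mem_support_iff.mp hm h0
      have hm2 : subPart A a ∈ partn q (n+1 - ∑ j, a j) := by
        refine mem_partn.mpr ⟨?_, by omega⟩
        exact Finsupp.notMem_support_iff.mp fun hmem => h00 (support_subPart_subset hmem)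
      exact ⟨hm1, hm2⟩
    · rintro ⟨a, A'⟩ hx
      dsimp only
      rw [Finset.mem_sigma] at hx ⊢
      dsimp only at hx
      obtain ⟨ha, hA'⟩ := hx
      obtain ⟨hs1, hs2⟩ := mem_Ufin.mp ha
      have ha0 : a ≠ 0 := by
        intro h; rw [h] at hs1; simp at hs1
      obtain ⟨h0, hw⟩ := mem_partn.mp hA'
      constructor
      · refine mem_partn.mpr ⟨?_, ?_⟩
        · rw [addPart_apply, if_neg ha0]; exact h0
        · rw [wsum_addPart, hw]; omega
      · exact Finsupp.mem_support_iff.mpr (by rw [addPart_apply, if_pos rfl]; omega)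
    · rintro ⟨A, a⟩ hx
      rw [Finset.mem_sigma] at hx
      have haA : 1 ≤ A a := Nat.pos_of_ne_zero (Finsupp.mem_support_iff.mp hx.2)
      simp only [subPart_addPart haA]
    · rintro ⟨a, A'⟩ hx
      simp only [addPart_subPart]
    · rintro ⟨A, a⟩ hx
      rw [Finset.mem_sigma] at hx
      obtain ⟨hA, ha⟩ := hx
      obtain ⟨h0, hw⟩ := mem_partn.mp hA
      have haA : 1 ≤ A a := Nat.pos_of_ne_zero (Finsupp.mem_support_iff.mp ha)
      have hrec : addPart (subPart A a) a = A := subPart_addPart haA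
      have hsupp' : (subPart A a).support ⊆ A.support := support_subPart_subset
      have hA'a : A a = subPart A a a + 1 := by
        conv_lhs => rw [← hrec]
        rw [addPart_apply, if_pos rfl]
      have htA : tA θ p A = tA θ p (subPart A a) *
          (wgt θ p a / ((subPart A a a : ℝ) + 1)) :=
        calc tA θ p A = tU θ p A.support (addPart (subPart A a) a) := by rw [hrec]; rfl
          _ = tU θ p A.support (subPart A a) *
              (wgt θ p a / ((subPart A a a : ℝ) + 1)) := tU_addPart ha
          _ = tA θ p (subPart A a) * (wgt θ p a / ((subPart A a a : ℝ) + 1)) := by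
              rw [tU_eq hsupp']
      show ((A a * (∑ j, a j) : ℕ) : ℝ) * tA θ p A
        = ((∑ j, a j : ℕ) : ℝ) * wgt θ p a * tA θ p (subPart A a)
      rw [htA, hA'a]
      have hne : ((subPart A a a : ℕ) : ℝ) + 1 ≠ 0 := by positivity
      push_cast
      field_simp
  have step3 : ∑ x ∈ (Ufin q (n+1)).sigma (fun a => partn q (n+1 - ∑ j, a j)),
        ((∑ j, x.1 j : ℕ) : ℝ) * wgt θ p x.1 * tA θ p x.2
      = ∑ a ∈ Ufin q (n+1),
          ((∑ j, a j : ℕ) : ℝ) * wgt θ p a * Fsum θ p (n+1 - ∑ j, a j) := by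
    rw [Finset.sum_sigma]
    exact Finset.sum_congr rfl fun a _ => by dsimp only; rw [Fsum, Finset.mul_sum]
  have hdisj : (↑(Finset.Icc 1 (n+1)) : Set ℕ).PairwiseDisjoint
      (fun m => Finset.piAntidiag (Finset.univ : Finset (Fin q)) m) := by
    intro m₁ _ m₂ _ hne
    refine Finset.disjoint_left.mpr fun {a} ha1 ha2 => ?_
    obtain ⟨e1, -⟩ := Finset.mem_piAntidiag.mp ha1
    obtain ⟨e2, -⟩ := Finset.mem_piAntidiag.mp ha2
    exact hne (e1 ▸ e2 ▸ rfl)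
  have step4 : ∑ a ∈ Ufin q (n+1),
        ((∑ j, a j : ℕ) : ℝ) * wgt θ p a * Fsum θ p (n+1 - ∑ j, a j)
      = ∑ m ∈ Finset.Icc 1 (n+1), θ * Fsum θ p (n+1-m) := by
    rw [Ufin, Finset.sum_biUnion hdisj]
    refine Finset.sum_congr rfl fun m hm => ?_
    obtain ⟨hm1, hm2⟩ := Finset.mem_Icc.mp hm
    have hmsum : ∑ a ∈ Finset.piAntidiag (Finset.univ : Finset (Fin q)) m,
        (Nat.multinomial Finset.univ a : ℝ) * ∏ j, p j ^ a j = 1 := by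
      rw [← Finset.sum_pow_eq_sum_piAntidiag, hp1, one_pow]
    calc ∑ a ∈ Finset.piAntidiag (Finset.univ : Finset (Fin q)) m,
          ((∑ j, a j : ℕ) : ℝ) * wgt θ p a * Fsum θ p (n+1 - ∑ j, a j)
        = ∑ a ∈ Finset.piAntidiag (Finset.univ : Finset (Fin q)) m,
            ((Nat.multinomial Finset.univ a : ℝ) * ∏ j, p j ^ a j)
              * (θ * Fsum θ p (n+1-m)) := by
          refine Finset.sum_congr rfl fun a ha => ?_
          obtain ⟨hsum, -⟩ := Finset.mem_piAntidiag.mp ha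
          rw [show Finset.univ.sum a = ∑ j, a j from rfl] at hsum
          rw [hsum, wgt, hsum]
          have hmne : (m:ℝ) ≠ 0 := Nat.cast_ne_zero.mpr (by omega)
          field_simp
      _ = θ * Fsum θ p (n+1-m) := by
          rw [← Finset.sum_mul, hmsum, one_mul]
  have step5 : ∑ m ∈ Finset.Icc 1 (n+1), θ * Fsum θ p (n+1-m)
      = θ * ∑ k ∈ Finset.range (n+1), Fsum θ p k := by
    rw [← Finset.mul_sum]
    congr 1
    refine Finset.sum_nbij' (fun m => n+1-m) (fun k => n+1-k) ?_ ?_ ?_ ?_ ?_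
    · intro m hm; rw [Finset.mem_Icc] at hm; rw [Finset.mem_range]; omega
    · intro k hk; rw [Finset.mem_range] at hk; rw [Finset.mem_Icc]; omega
    · intro m hm; rw [Finset.mem_Icc] at hm; omega
    · intro k hk; rw [Finset.mem_range] at hk; omega
    · intro m hm; rfl
  rw [step1, step2, step3, step4, step5]

end Aux4
section Aux5
variable {q : ℕ}

lemma Fsum_eq (θ : ℝ) (p : Fin q → ℝ) (hp1 : ∑ j, p j = 1) (n : ℕ) :
    Fsum θ p n = aPoch θ n := by
  induction n using Nat.strong_induction_on with
  | _ n ih =>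
    match n with
    | 0 => rw [Fsum_zero, aPoch_zero]
    | (m+1) =>
      have h3 : ∑ k ∈ Finset.range (m+1), Fsum θ p k
          = ∑ k ∈ Finset.range (m+1), aPoch θ k :=
        Finset.sum_congr rfl fun k hk => ih k (by rw [Finset.mem_range] at hk; omega)
      have hne : ((m:ℝ)+1) ≠ 0 := by positivity
      refine mul_left_cancel₀ hne ?_
      rw [show ((m:ℝ)+1) * Fsum θ p (m+1) = ((m:ℝ)+1) * Fsum θ p (m+1) from rfl,
        Fsum_rec θ p hp1 m, h3, aPoch_rec]

lemma esf_eq (θ : ℝ) (p : Fin q → ℝ) {n : ℕ} {A : (Fin q → ℕ) →₀ ℕ}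
    (hA : A ∈ partn q n) :
    esf θ p n A = (n ! : ℝ) / (ascPochhammer ℝ n).eval θ * tA θ p A := by
  obtain ⟨h0, hw⟩ := mem_partn.mp hA
  have hDne : (∏ j, ((colA A j)! : ℝ)) ≠ 0 :=
    Finset.prod_ne_zero_iff.mpr fun j _ => Nat.cast_ne_zero.mpr (Nat.factorial_ne_zero _)
  have cancel : ∀ C s P Q : ℝ,
      C * s * (P / (∏ j, ((colA A j)! : ℝ))) * ((∏ j, ((colA A j)! : ℝ)) * Q)
        = C * (s * P * Q) := by
    intro C s P Q
    field_simp
  rw [esf, Mcoef, cancel]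
  congr 1
  -- θ ^ asize A * ∏ p^col * Q = tA
  have hthet : θ ^ asize A = ∏ a ∈ A.support, θ ^ A a := by
    rw [asize, ← Finset.prod_pow_eq_pow_sum]
  have hP : ∏ j, p j ^ colA A j = ∏ a ∈ A.support, (∏ j, p j ^ a j) ^ A a := by
    simp only [colA]
    calc ∏ j, p j ^ (∑ a ∈ A.support, A a * a j)
        = ∏ j, ∏ a ∈ A.support, p j ^ (A a * a j) := by
          refine Finset.prod_congr rfl fun j _ => ?_
          rw [← Finset.prod_pow_eq_pow_sum]
      _ = ∏ a ∈ A.support, ∏ j, p j ^ (A a * a j) := Finset.prod_comm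
      _ = ∏ a ∈ A.support, (∏ j, p j ^ a j) ^ A a := by
          refine Finset.prod_congr rfl fun a _ => ?_
          rw [← Finset.prod_pow]
          refine Finset.prod_congr rfl fun j _ => ?_
          rw [mul_comm, pow_mul]
  rw [hthet, hP, ← Finset.prod_mul_distrib, ← Finset.prod_mul_distrib]
  refine Finset.prod_congr rfl fun a ha => ?_
  have haA : A a ≠ 0 := Finsupp.mem_support_iff.mp ha
  have ha0 : a ≠ 0 := fun hh => haA (by rw [hh]; exact h0)
  have hs1 : 1 ≤ ∑ j, a j := one_le_sum_of_ne_zero ha0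
  have hs : ((∑ j, a j : ℕ) : ℝ) ≠ 0 := Nat.cast_ne_zero.mpr (by omega)
  have hcast : (∑ j, (a j : ℝ)) = ((∑ j, a j : ℕ) : ℝ) := by push_cast; rfl
  have hfne : ((A a)! : ℝ) ≠ 0 := Nat.cast_ne_zero.mpr (Nat.factorial_ne_zero _)
  rw [hcast, wgt, div_pow, mul_pow, mul_pow]
  field_simp

end Aux5

/-- **The polychromatic ESF is a probability distribution on `𝒜_n`**: for every
`n, q ≥ 1`, `θ > 0` and `p ∈ Δ^{q-1}`,
`∑_{A ∈ 𝒜_n} (n!/(θ)_n) θ^{‖A‖} (p^{col A}/(col A)!) M_{col A}(A) = 1`. -/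
theorem esf_is_probability (n q : ℕ) (hn : 1 ≤ n) (hq : 1 ≤ q)
    (θ : ℝ) (hθ : 0 < θ) (p : Fin q → ℝ) (hp : ∀ j, 0 ≤ p j) (hp1 : ∑ j, p j = 1) :
    ∑ᶠ A ∈ {A : (Fin q → ℕ) →₀ ℕ | A 0 = 0 ∧ ∑ j, colA A j = n},
      esf θ p n A = 1 := by
  have hset : {A : (Fin q → ℕ) →₀ ℕ | A 0 = 0 ∧ ∑ j, colA A j = n}
      = ↑(partn q n) := by
    ext A
    rw [Set.mem_setOf_eq, Finset.mem_coe, mem_partn, sum_colA]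
  rw [hset, finsum_mem_coe_finset]
  rw [Finset.sum_congr rfl fun A hA => esf_eq θ p hA, ← Finset.mul_sum]
  have h2 : ∑ A ∈ partn q n, tA θ p A = Fsum θ p n := rfl
  rw [h2, Fsum_eq θ p hp1 n, aPoch]
  have h3 : (ascPochhammer ℝ n).eval θ ≠ 0 := ne_of_gt (ascPochhammer_pos n θ hθ)
  have h4 : ((n)! : ℝ) ≠ 0 := Nat.cast_ne_zero.mpr (Nat.factorial_ne_zero n)
  field_simp
end

section
/- Fix n,q ≥ 1, θ > 0, p ∈ Δ^{q−1} with all p_j > 0, and 𝐧 ∈ ℕ^q with |𝐧| = n. Then Esf_{θ,p}^n({A : col A = 𝐧}) = n! p^𝐧/𝐧!, and the conditional probability of Esf_{θ,p}^n given the event {col(·) = 𝐧} satisfies, for every A ⊨ 𝐧, Esf_{θ,p}^n(A | col(·) = 𝐧) = θ^{‖A‖} M_𝐧(A)/(θ)_n; in particular this conditional distribution does not depend on p. -/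
open Finset Nat
open scoped Classical

/-!
Put `w(a) = θ · multinomial(a) / |a|`. Then `θ^{‖A‖} M_𝐧(A) = 𝐧! ∏_a w(a)^{A(a)} / A(a)!`,
so on `{col = 𝐧}` the ESF factors as `(n! p^𝐧 / 𝐧!) · θ^{‖A‖} M_𝐧(A) / (θ)_n`, and everything
reduces to `S(𝐧) := ∑_{A ⊨ 𝐧} ∏_a w(a)^{A(a)} / A(a)! = (θ)_{|𝐧|} / 𝐧!`.

`S(𝐧)` is the coefficient of `x^𝐧` in `exp (∑_a w(a) x^a) = (1 - ∑_j x_j)^{-θ}`; rather than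
expanding power series we prove by induction on `|𝐧|` the recursion
`(m_j + 1) S(𝐦 + e_j) = (θ + |𝐦|) S(𝐦)`. Removing one part `a` from `A` (weighted by `A(a) a_j`)
gives `(m_j + 1) S(𝐦 + e_j) = ∑_a a_j w(a) S(𝐦 + e_j - a)`. The part `a = e_j` contributes
`θ S(𝐦)`, and for `a = b + e_j` with `b ≠ 0` one has `(b_j + 1) w(b + e_j) = |b| w(b)`, so by the
same removal identity the remaining terms add up to `|𝐦| S(𝐦)`.
-/

section ColoredPartitions

variable {q : ℕ}

lemma Finsupp.sub_single_one_add_cancel {α : Type*} {A : α →₀ ℕ} {a : α} (ha : A a ≠ 0) :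
    A - Finsupp.single a 1 + Finsupp.single a 1 = A :=
  tsub_add_cancel_of_le (Finsupp.single_le_iff.mpr (Nat.one_le_iff_ne_zero.mpr ha))

lemma colA_eq_sum (A : (Fin q → ℕ) →₀ ℕ) : colA A = A.sum fun a k => k • a := by
  funext j
  simp [colA, Finsupp.sum, Finset.sum_apply]

lemma colA_apply_eq_sum (A : (Fin q → ℕ) →₀ ℕ) (i : Fin q) :
    (colA A i : ℝ) = A.sum fun a k => (k : ℝ) * a i := by
  simp [colA, Finsupp.sum]

lemma sum_colA_eq_sum (A : (Fin q → ℕ) →₀ ℕ) :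
    ∑ i, (colA A i : ℝ) = A.sum fun a k => (k : ℝ) * ∑ i, (a i : ℝ) := by
  simp only [colA_apply_eq_sum, Finsupp.sum, Finset.mul_sum]
  exact Finset.sum_comm

lemma colA_add (A B : (Fin q → ℕ) →₀ ℕ) : colA (A + B) = colA A + colA B := by
  simp only [colA_eq_sum]
  exact Finsupp.sum_add_index' (fun _ => zero_smul ℕ _) fun _ _ _ => add_smul _ _ _

lemma colA_single (a : Fin q → ℕ) (k : ℕ) : colA (Finsupp.single a k) = k • a := by
  rw [colA_eq_sum, Finsupp.sum_single_index (zero_smul ℕ a)]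

lemma colA_sub_single_add {A : (Fin q → ℕ) →₀ ℕ} {a : Fin q → ℕ} (ha : A a ≠ 0) :
    colA (A - Finsupp.single a 1) + a = colA A := by
  conv_rhs => rw [← Finsupp.sub_single_one_add_cancel ha]
  rw [colA_add, colA_single, one_smul]

lemma apply_mul_le_colA (A : (Fin q → ℕ) →₀ ℕ) (a : Fin q → ℕ) (i : Fin q) :
    A a * a i ≤ colA A i := by
  by_cases ha : a ∈ A.support
  · exact Finset.single_le_sum (f := fun b => A b * b i) (fun _ _ => Nat.zero_le _) ha
  · simp [Finsupp.notMem_support_iff.mp ha]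

lemma le_colA_of_apply_ne_zero {A : (Fin q → ℕ) →₀ ℕ} {a : Fin q → ℕ} (ha : A a ≠ 0) :
    a ≤ colA A := fun i =>
  (Nat.le_mul_of_pos_left _ (Nat.pos_of_ne_zero ha)).trans (apply_mul_le_colA A a i)

lemma apply_le_colA {A : (Fin q → ℕ) →₀ ℕ} {a : Fin q → ℕ} {i : Fin q} (hai : a i ≠ 0) :
    A a ≤ colA A i :=
  (Nat.le_mul_of_pos_right _ (Nat.pos_of_ne_zero hai)).trans (apply_mul_le_colA A a i)

lemma cPartSet_finite (n : Fin q → ℕ) : (CPartSet n).Finite := by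
  refine ((Iic n).finsupp fun _ => range (∑ i, n i + 1)).finite_toSet.subset ?_
  rintro A ⟨hA0, rfl⟩
  refine Finset.mem_finsupp_iff.mpr ⟨fun a ha => mem_Iic.mpr ?_, fun a _ => ?_⟩
  · exact le_colA_of_apply_ne_zero (Finsupp.mem_support_iff.mp ha)
  · rw [mem_range, Nat.lt_succ_iff]
    by_cases ha : a = 0
    · simp [ha, hA0]
    obtain ⟨i, hi⟩ := Function.ne_iff.mp ha
    exact (apply_le_colA hi).trans (single_le_sum (fun _ _ => Nat.zero_le _) (mem_univ i))

noncomputable def cPartFinset (n : Fin q → ℕ) : Finset ((Fin q → ℕ) →₀ ℕ) :=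
  (cPartSet_finite n).toFinset

@[simp]
lemma mem_cPartFinset {n : Fin q → ℕ} {A : (Fin q → ℕ) →₀ ℕ} :
    A ∈ cPartFinset n ↔ A ∈ CPartSet n :=
  Set.Finite.mem_toFinset _

lemma eq_zero_of_mem_cPartSet_zero {A : (Fin q → ℕ) →₀ ℕ} (hA : A ∈ CPartSet 0) : A = 0 := by
  ext a
  by_contra ha
  have ha0 : a = 0 := le_antisymm (hA.2 ▸ le_colA_of_apply_ne_zero ha) bot_le
  exact ha (ha0 ▸ hA.1)

lemma add_single_mem_cPartSet {n a : Fin q → ℕ} {B : (Fin q → ℕ) →₀ ℕ}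
    (hB : B ∈ CPartSet (n - a)) (ha0 : a ≠ 0) (han : a ≤ n) :
    B + Finsupp.single a 1 ∈ CPartSet n := by
  refine ⟨by simp [hB.1, Ne.symm ha0], ?_⟩
  rw [colA_add, colA_single, one_smul, hB.2, tsub_add_cancel_of_le han]

lemma sub_single_mem_cPartSet {n a : Fin q → ℕ} {A : (Fin q → ℕ) →₀ ℕ}
    (hA : A ∈ CPartSet n) (ha : A a ≠ 0) :
    A - Finsupp.single a 1 ∈ CPartSet (n - a) := by
  refine ⟨by simp [hA.1], ?_⟩
  rw [← hA.2, ← colA_sub_single_add ha, add_tsub_cancel_right]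

end ColoredPartitions

section ExponentialFormula

variable {q : ℕ} (w : (Fin q → ℕ) → ℝ)

noncomputable def partWeight (A : (Fin q → ℕ) →₀ ℕ) : ℝ :=
  A.prod fun a k => w a ^ k / k !

noncomputable def partSum (n : Fin q → ℕ) : ℝ :=
  ∑ A ∈ cPartFinset n, partWeight w A

lemma succ_mul_partWeight_add_single (B : (Fin q → ℕ) →₀ ℕ) (c : Fin q → ℕ) :
    ((B c : ℝ) + 1) * partWeight w (B + Finsupp.single c 1) = w c * partWeight w B := by
  have split : ∀ A : (Fin q → ℕ) →₀ ℕ, partWeight w A =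
      w c ^ A c / (A c)! * (A.erase c).prod fun a k => w a ^ k / k ! := fun A =>
    (Finsupp.mul_prod_erase' A c _ fun _ => by simp).symm
  have herase : (B + Finsupp.single c 1).erase c = B.erase c := by
    rw [Finsupp.erase_add, Finsupp.erase_single, add_zero]
  rw [split, split, herase, Finsupp.add_apply, Finsupp.single_eq_same, pow_succ,
    Nat.factorial_succ, Nat.cast_mul, Nat.cast_succ]
  field_simp

lemma apply_mul_partWeight {A : (Fin q → ℕ) →₀ ℕ} {c : Fin q → ℕ} (hc : A c ≠ 0) :
    (A c : ℝ) * partWeight w A = w c * partWeight w (A - Finsupp.single c 1) := by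
  have hAc : (((A - Finsupp.single c 1 : (Fin q → ℕ) →₀ ℕ) c : ℕ) : ℝ) + 1 = A c := by
    rw [Finsupp.tsub_apply, Finsupp.single_eq_same]
    exact_mod_cast Nat.sub_add_cancel (Nat.one_le_iff_ne_zero.mpr hc)
  have key := succ_mul_partWeight_add_single w (A - Finsupp.single c 1) c
  rwa [Finsupp.sub_single_one_add_cancel hc, hAc] at key

lemma sum_apply_mul_partWeight {n a : Fin q → ℕ} (ha0 : a ≠ 0) (han : a ≤ n) :
    ∑ A ∈ cPartFinset n, (A a : ℝ) * partWeight w A = w a * partSum w (n - a) := by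
  rw [partSum, Finset.mul_sum, ← Finset.sum_filter_of_ne (p := fun A => A a ≠ 0)
    fun A _ h => by rintro hA; simp [hA] at h]
  refine Finset.sum_nbij' (· - Finsupp.single a 1) (· + Finsupp.single a 1) ?_ ?_ ?_ ?_ ?_
  · intro A hA
    simp only [Finset.mem_filter, mem_cPartFinset] at hA
    exact mem_cPartFinset.mpr (sub_single_mem_cPartSet hA.1 hA.2)
  · intro B hB
    simp only [Finset.mem_filter, mem_cPartFinset] at hB ⊢
    exact ⟨add_single_mem_cPartSet hB ha0 han, by simp⟩
  · intro A hA
    exact Finsupp.sub_single_one_add_cancel (Finset.mem_filter.mp hA).2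
  · intro B _
    exact add_tsub_cancel_right B _
  · intro A hA
    exact apply_mul_partWeight w (Finset.mem_filter.mp hA).2

lemma sum_weighted_partWeight (g : (Fin q → ℕ) → ℝ) (n : Fin q → ℕ) :
    ∑ A ∈ cPartFinset n, (A.sum fun a k => k * g a) * partWeight w A =
      ∑ a ∈ (Iic n).erase 0, g a * w a * partSum w (n - a) := by
  have hsupp : ∀ A ∈ cPartFinset n, (A.sum fun a k => (k : ℝ) * g a) =
      ∑ a ∈ (Iic n).erase 0, (A a : ℝ) * g a := by
    intro A hA
    refine Finset.sum_subset (fun a ha => ?_) fun a _ ha => ?_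
    · have hAa := Finsupp.mem_support_iff.mp ha
      have hA' := mem_cPartFinset.mp hA
      refine Finset.mem_erase.mpr ⟨fun ha0 => hAa (ha0 ▸ hA'.1), mem_Iic.mpr ?_⟩
      exact hA'.2 ▸ le_colA_of_apply_ne_zero hAa
    · simp [Finsupp.notMem_support_iff.mp ha]
  calc ∑ A ∈ cPartFinset n, (A.sum fun a k => k * g a) * partWeight w A
      = ∑ a ∈ (Iic n).erase 0, g a * ∑ A ∈ cPartFinset n, (A a : ℝ) * partWeight w A := by
        rw [Finset.sum_congr rfl fun A hA => by rw [hsupp A hA, Finset.sum_mul],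
          Finset.sum_comm]
        refine Finset.sum_congr rfl fun a _ => ?_
        rw [Finset.mul_sum]
        exact Finset.sum_congr rfl fun _ _ => by ring
    _ = ∑ a ∈ (Iic n).erase 0, g a * w a * partSum w (n - a) := by
        refine Finset.sum_congr rfl fun a ha => ?_
        obtain ⟨ha0, han⟩ := Finset.mem_erase.mp ha
        rw [sum_apply_mul_partWeight w ha0 (mem_Iic.mp han), mul_assoc]

end ExponentialFormula

section EwensWeight

variable {q : ℕ}

lemma Pi.sub_single_one_add_cancel {ι : Type*} [DecidableEq ι] {a : ι → ℕ} {j : ι}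
    (ha : a j ≠ 0) : a - Pi.single j 1 + Pi.single j 1 = a := by
  refine tsub_add_cancel_of_le fun i => ?_
  rcases eq_or_ne i j with rfl | hij
  · simpa [Nat.one_le_iff_ne_zero] using ha
  · simp [hij]

lemma sum_add_single (b : Fin q → ℕ) (j : Fin q) :
    ∑ i, (b + Pi.single j 1 : Fin q → ℕ) i = ∑ i, b i + 1 := by
  simp [Finset.sum_add_distrib]

lemma prod_factorial_add_single (b : Fin q → ℕ) (j : Fin q) :
    ∏ i, ((b + Pi.single j 1 : Fin q → ℕ) i)! = (b j + 1) * ∏ i, (b i)! := by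
  have hi : ∀ i, ((b + Pi.single j 1 : Fin q → ℕ) i)! = (b i)! * if i = j then b j + 1 else 1 := by
    intro i
    by_cases hij : i = j
    · subst hij
      simp [Nat.factorial_succ, mul_comm]
    · simp [hij]
  simp only [hi, Finset.prod_mul_distrib, Finset.prod_ite_eq', Finset.mem_univ, if_true, mul_comm]

lemma succ_mul_multinomial_add_single (b : Fin q → ℕ) (j : Fin q) :
    (b j + 1) * Nat.multinomial univ (b + Pi.single j 1) =
      (∑ i, b i + 1) * Nat.multinomial univ b := by
  have hpos : 0 < ∏ i, (b i)! := Finset.prod_pos fun i _ => Nat.factorial_pos _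
  refine Nat.eq_of_mul_eq_mul_left hpos ?_
  calc (∏ i, (b i)!) * ((b j + 1) * Nat.multinomial univ (b + Pi.single j 1))
      = (∑ i, (b + Pi.single j 1 : Fin q → ℕ) i)! := by
        rw [← Nat.multinomial_spec, prod_factorial_add_single]
        ring
    _ = (∏ i, (b i)!) * ((∑ i, b i + 1) * Nat.multinomial univ b) := by
        rw [sum_add_single, Nat.factorial_succ, ← Nat.multinomial_spec]
        ring

noncomputable def ewensWeight (θ : ℝ) (a : Fin q → ℕ) : ℝ :=
  θ * Nat.multinomial univ a / ∑ i, (a i : ℝ)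

lemma ewensWeight_single (θ : ℝ) (j : Fin q) : ewensWeight θ (Pi.single j 1) = θ := by
  rw [ewensWeight, ← Nat.cast_sum, Finset.sum_pi_single', Nat.multinomial_single]
  simp

lemma succ_mul_ewensWeight_add_single (θ : ℝ) {b : Fin q → ℕ} (hb : b ≠ 0) (j : Fin q) :
    ((b j : ℝ) + 1) * ewensWeight θ (b + Pi.single j 1) = (∑ i, (b i : ℝ)) * ewensWeight θ b := by
  have hM : ((b j : ℝ) + 1) * Nat.multinomial univ (b + Pi.single j 1) =
      (∑ i, (b i : ℝ) + 1) * Nat.multinomial univ b := by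
    exact_mod_cast succ_mul_multinomial_add_single b j
  have hsum : ∑ i, ((b + Pi.single j 1 : Fin q → ℕ) i : ℝ) = ∑ i, (b i : ℝ) + 1 := by
    exact_mod_cast sum_add_single b j
  have hb' : ∑ i, (b i : ℝ) ≠ 0 := by
    obtain ⟨i, hi⟩ := Function.ne_iff.mp hb
    exact_mod_cast (Finset.sum_pos' (fun _ _ => Nat.zero_le _)
      ⟨i, mem_univ i, Nat.pos_of_ne_zero hi⟩).ne'
  unfold ewensWeight
  rw [hsum]
  field_simp
  linear_combination θ * hM

lemma sum_erase_Iic_add_single (F : (Fin q → ℕ) → ℝ) (m : Fin q → ℕ) (j : Fin q) :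
    ∑ a ∈ (Iic (m + Pi.single j 1)).erase 0, (a j : ℝ) * F a =
      ∑ b ∈ Iic m, ((b j : ℝ) + 1) * F (b + Pi.single j 1) := by
  rw [← Finset.sum_filter_of_ne (p := fun a => a j ≠ 0)
    fun a _ h => by rintro ha; simp [ha] at h]
  refine Finset.sum_nbij' (· - Pi.single j 1) (· + Pi.single j 1) ?_ ?_ ?_ ?_ ?_
  · intro a ha
    simp only [Finset.mem_filter, Finset.mem_erase, mem_Iic] at ha
    exact mem_Iic.mpr (tsub_le_iff_right.mpr ha.1.2)
  · intro b hb
    have hbj : (b + Pi.single j 1 : Fin q → ℕ) j ≠ 0 := by simp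
    simp only [Finset.mem_filter, Finset.mem_erase, mem_Iic] at hb ⊢
    exact ⟨⟨fun h => hbj (by rw [h]; rfl), add_le_add hb le_rfl⟩, hbj⟩
  · intro a ha
    exact Pi.sub_single_one_add_cancel (Finset.mem_filter.mp ha).2
  · intro b _
    exact add_tsub_cancel_right b _
  · intro a ha
    have hae := Pi.sub_single_one_add_cancel (Finset.mem_filter.mp ha).2
    have haj : (a j : ℝ) = ((a - Pi.single j 1 : Fin q → ℕ) j : ℝ) + 1 := by
      conv_lhs => rw [← hae]
      simp
    rw [hae, haj]

lemma partSum_ewensWeight_add_single (θ : ℝ) (m : Fin q → ℕ) (j : Fin q) :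
    ((m j : ℝ) + 1) * partSum (ewensWeight θ) (m + Pi.single j 1) =
      (θ + ∑ i, (m i : ℝ)) * partSum (ewensWeight θ) m := by
  set w := ewensWeight θ
  have hcol : ∀ A ∈ cPartFinset (m + Pi.single j 1),
      (A.sum fun a k => (k : ℝ) * a j) = (m j : ℝ) + 1 := by
    intro A hA
    rw [← colA_apply_eq_sum, (mem_cPartFinset.mp hA).2]
    simp
  have hsize : ∀ B ∈ cPartFinset m,
      (B.sum fun a k => (k : ℝ) * ∑ i, (a i : ℝ)) = ∑ i, (m i : ℝ) := by
    intro B hB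
    rw [← sum_colA_eq_sum, (mem_cPartFinset.mp hB).2]
  calc ((m j : ℝ) + 1) * partSum w (m + Pi.single j 1)
      = ∑ A ∈ cPartFinset (m + Pi.single j 1),
          (A.sum fun a k => (k : ℝ) * a j) * partWeight w A := by
        rw [partSum, Finset.mul_sum]
        exact Finset.sum_congr rfl fun A hA => by rw [hcol A hA]
    _ = ∑ b ∈ Iic m, ((b j : ℝ) + 1) * w (b + Pi.single j 1) * partSum w (m - b) := by
        rw [sum_weighted_partWeight]
        simp_rw [mul_assoc]
        rw [sum_erase_Iic_add_single]
        simp only [add_tsub_add_eq_tsub_right]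
    _ = θ * partSum w m +
          ∑ b ∈ (Iic m).erase 0, (∑ i, (b i : ℝ)) * w b * partSum w (m - b) := by
        rw [← Finset.add_sum_erase _ _ (a := 0) (mem_Iic.mpr bot_le)]
        congr 1
        · simp [w, ewensWeight_single]
        · refine Finset.sum_congr rfl fun b hb => ?_
          rw [succ_mul_ewensWeight_add_single θ (Finset.ne_of_mem_erase hb)]
    _ = (θ + ∑ i, (m i : ℝ)) * partSum w m := by
        rw [← sum_weighted_partWeight, add_mul, partSum, Finset.mul_sum, Finset.mul_sum]
        congr 1
        exact Finset.sum_congr rfl fun B hB => by rw [hsize B hB]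

lemma partSum_zero (w : (Fin q → ℕ) → ℝ) : partSum w 0 = 1 := by
  have h : cPartFinset (0 : Fin q → ℕ) = {0} := by
    ext A
    rw [mem_cPartFinset, Finset.mem_singleton]
    refine ⟨eq_zero_of_mem_cPartSet_zero, ?_⟩
    rintro rfl
    exact ⟨rfl, by rw [colA_eq_sum, Finsupp.sum_zero_index]⟩
  simp [partSum, h, partWeight]

lemma partSum_ewensWeight_mul_prod_factorial (θ : ℝ) (n : Fin q → ℕ) :
    partSum (ewensWeight θ) n * ∏ i, ((n i)! : ℝ) = (ascPochhammer ℝ (∑ i, n i)).eval θ := by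
  induction hk : ∑ i, n i generalizing n with
  | zero =>
    obtain rfl : n = 0 := funext fun i => Finset.sum_eq_zero_iff.mp hk i (mem_univ i)
    simp [partSum_zero]
  | succ k ih =>
    obtain ⟨j, hj⟩ : ∃ j, n j ≠ 0 := by
      by_contra! h
      simp [h] at hk
    obtain ⟨m, rfl⟩ : ∃ m, n = m + Pi.single j 1 :=
      ⟨n - Pi.single j 1, (Pi.sub_single_one_add_cancel hj).symm⟩
    have hm : ∑ i, m i = k := by
      rw [sum_add_single] at hk
      omega
    have hfact : ∏ i, (((m + Pi.single j 1 : Fin q → ℕ) i)! : ℝ) =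
        ((m j : ℝ) + 1) * ∏ i, ((m i)! : ℝ) := by
      exact_mod_cast prod_factorial_add_single m j
    rw [hfact, ← mul_assoc, mul_comm (partSum _ _), partSum_ewensWeight_add_single, mul_assoc,
      ih m hm, ascPochhammer_succ_eval, ← hm, Nat.cast_sum]
    ring

lemma pow_asize_mul_mcoef (θ : ℝ) (n : Fin q → ℕ) (A : (Fin q → ℕ) →₀ ℕ) :
    θ ^ asize A * Mcoef n A = (∏ i, ((n i)! : ℝ)) * partWeight (ewensWeight θ) A := by
  rw [Mcoef, asize, ← Finset.prod_pow_eq_pow_sum, mul_left_comm, partWeight, Finsupp.prod,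
    ← Finset.prod_mul_distrib]
  congr 1
  refine Finset.prod_congr rfl fun a _ => ?_
  rw [ewensWeight, div_pow, mul_pow]
  ring

end EwensWeight

theorem esf_conditioned_on_col_general (n q : ℕ)
    (θ : ℝ) (hθ : 0 < θ) (p : Fin q → ℝ) (hp : ∀ j, 0 < p j)
    (nv : Fin q → ℕ) (hnv : ∑ j, nv j = n) :
    (∑ᶠ A ∈ CPartSet nv, esf θ p n A =
      (n ! : ℝ) * (∏ j, p j ^ nv j) / ∏ j, ((nv j)! : ℝ)) ∧
    (∀ A ∈ CPartSet nv,
      esf θ p n A / (∑ᶠ A' ∈ CPartSet nv, esf θ p n A') =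
        θ ^ asize A * Mcoef nv A / (ascPochhammer ℝ n).eval θ) := by
  have hpoch : (ascPochhammer ℝ n).eval θ ≠ 0 := (ascPochhammer_pos n θ hθ).ne'
  have hpow : ∏ j, p j ^ nv j ≠ 0 := (Finset.prod_pos fun j _ => pow_pos (hp j) _).ne'
  have hfact : ∏ j, ((nv j)! : ℝ) ≠ 0 := by positivity
  have hsum : ∑ A ∈ cPartFinset nv, θ ^ asize A * Mcoef nv A = (ascPochhammer ℝ n).eval θ := by
    simp_rw [pow_asize_mul_mcoef, ← Finset.mul_sum]
    rw [← partSum, mul_comm, partSum_ewensWeight_mul_prod_factorial, hnv]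
  have hesf : ∀ A ∈ CPartSet nv, esf θ p n A = (n ! : ℝ) / (ascPochhammer ℝ n).eval θ *
      ((∏ j, p j ^ nv j) / ∏ j, ((nv j)! : ℝ)) * (θ ^ asize A * Mcoef nv A) := by
    rintro A ⟨-, hA⟩
    rw [esf, hA]
    ring
  have htotal : ∑ᶠ A ∈ CPartSet nv, esf θ p n A =
      (n ! : ℝ) * (∏ j, p j ^ nv j) / ∏ j, ((nv j)! : ℝ) := by
    rw [finsum_mem_eq_finite_toFinset_sum _ (cPartSet_finite nv), ← cPartFinset,
      Finset.sum_congr rfl fun A hA => hesf A (mem_cPartFinset.mp hA), ← Finset.mul_sum, hsum]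
    field_simp
  refine ⟨htotal, fun A hA => ?_⟩
  rw [htotal, hesf A hA]
  field_simp

/-- **Conditioning the polychromatic ESF on the color count.** For `θ > 0`,
`p ∈ Δ^{q-1}` with all `p_j > 0` and `𝐧` with `|𝐧| = n`:
`Esf_{θ,p}^n({col(·) = 𝐧}) = n! p^𝐧/𝐧!`, and for every `A ⊨ 𝐧` the conditional
probability is `Esf_{θ,p}^n(A | col(·) = 𝐧) = θ^{‖A‖} M_𝐧(A)/(θ)_n`, which in
particular does not depend on `p`. -/
theorem esf_conditioned_on_col (n q : ℕ) (hn : 1 ≤ n) (hq : 1 ≤ q)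
    (θ : ℝ) (hθ : 0 < θ) (p : Fin q → ℝ) (hp : ∀ j, 0 < p j) (hp1 : ∑ j, p j = 1)
    (nv : Fin q → ℕ) (hnv : ∑ j, nv j = n) :
    (∑ᶠ A ∈ CPartSet nv, esf θ p n A =
      (n ! : ℝ) * (∏ j, p j ^ nv j) / ∏ j, ((nv j)! : ℝ)) ∧
    (∀ A ∈ CPartSet nv,
      esf θ p n A / (∑ᶠ A' ∈ CPartSet nv, esf θ p n A') =
        θ ^ asize A * Mcoef nv A / (ascPochhammer ℝ n).eval θ) :=
  esf_conditioned_on_col_general n q θ hθ p hp nv hnv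
end
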